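/- Lemma A.1 (boundedness of the CAR imbalance process): Let (ξ_j)_{j≥1} be i.i.d. random vectors in ℝ^p with mean 0, covariance matrix equal to the identity I_p, and ‖ξ_j‖ ≤ B almost surely for some B > 0; let q ∈ (1/2, 1). Define η_0 = 0 and recursively η_{2k} = η_{2k−2} + S_k (ξ_{2k−1} − ξ_{2k}), where, conditionally on the past and on (ξ_{2k−1}, ξ_{2k}), S_k equals −sign(η_{2k−2}⋅(ξ_{2k−1} − ξ_{2k})) with probability q and the opposite sign with probability 1 − q whenever that inner product is nonzero, and S_k = ±1 with probability 1/2 each when it is zero. Then the sequence (‖η_{2k}‖²)_{k≥1} is bounded in probability: for every δ > 0 there exists K > 0 with P(‖η_{2k}‖² > K) ≤ δ for all k. Consequently M̃_m = ‖η_m‖²/m satisfies M̃_m = O_p(1/m). -/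

import Mathlib

open MeasureTheory ProbabilityTheory Finset

set_option maxHeartbeats 1000000


lemma exp_quad {x : ℝ} (hx : |x| ≤ 1) : Real.exp x ≤ 1 + x + x^2 := by
  have h := Real.exp_bound hx (n := 2) (by norm_num)
  have h2 : |Real.exp x - (1 + x)| ≤ |x|^2 * (3 / (2*2)) := by
    simpa [Finset.sum_range_succ, Nat.factorial] using h
  have := abs_le.1 h2
  nlinarith [sq_abs x, sq_nonneg x, this.2]

lemma norm_add_sub_le_inner {E : Type*} [NormedAddCommGroup E] [InnerProductSpace ℝ E]
    (h d : E) (ha : 0 < ‖h‖) :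
    ‖h + d‖ - ‖h‖ ≤ ((inner ℝ h d : ℝ) + ‖d‖^2 / 2) / ‖h‖ := by
  rw [le_div_iff₀ ha]
  have hsq : ‖h + d‖^2 = ‖h‖^2 + 2 * (inner ℝ h d : ℝ) + ‖d‖^2 := norm_add_sq_real h d
  nlinarith [sq_nonneg (‖h + d‖ - ‖h‖)]

lemma real_sign_mul_self (x : ℝ) : Real.sign x * x = |x| := by
  rcases lt_trichotomy x 0 with h | h | h
  · rw [Real.sign_of_neg h, abs_of_neg h]; ring
  · simp [h]
  · rw [Real.sign_of_pos h, abs_of_pos h]; ring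

lemma coord_le_norm {p : ℕ} (x : EuclideanSpace ℝ (Fin p)) (i : Fin p) : |x i| ≤ ‖x‖ := by
  rw [EuclideanSpace.norm_eq]
  have h1 : |x i| = Real.sqrt (‖x i‖^2) := by
    rw [Real.sqrt_sq_eq_abs]; simp [Real.norm_eq_abs, abs_abs]
  rw [h1]
  refine Real.sqrt_le_sqrt ?_
  exact Finset.single_le_sum (f := fun j => ‖x j‖^2) (fun j _ => sq_nonneg _) (Finset.mem_univ i)

lemma claimB {Ω : Type*} [m0 : MeasurableSpace Ω]
    (μ : Measure Ω) [IsProbabilityMeasure μ]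
    {p : ℕ} (B R θ CX : ℝ) (hB : 0 < B) (hR : 0 < R) (hθ : 0 < θ) (hCX : 0 ≤ CX)
    (X D : Ω → EuclideanSpace ℝ (Fin p))
    (hXm : Measurable X) (hDm : Measurable D)
    (hXD : IndepFun X D μ)
    (hXbd : ∀ᵐ ω ∂μ, ‖X ω‖ ≤ CX)
    (hDbd : ∀ᵐ ω ∂μ, ‖D ω‖ ≤ 2*B)
    (hDcov : ∀ i j : Fin p, ∫ ω, D ω i * D ω j ∂μ = if i = j then (2:ℝ) else 0) :
    (1/B) * ∫ ω, Set.indicator {ω' | R ≤ ‖X ω'‖} (fun ω' => Real.exp (θ*‖X ω'‖)) ω ∂μ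
      ≤ ∫ ω, Set.indicator {ω' | R ≤ ‖X ω'‖} (fun ω' => Real.exp (θ*‖X ω'‖)/‖X ω'‖) ω
            * |(inner ℝ (X ω) (D ω) : ℝ)| ∂μ := by
  classical
  set E : Set Ω := {ω' | R ≤ ‖X ω'‖} with hE_def
  have hEmeas : MeasurableSet E := hXm.norm measurableSet_Ici
  set fχ : EuclideanSpace ℝ (Fin p) → ℝ :=
    Set.indicator {x | R ≤ ‖x‖} (fun x => Real.exp (θ*‖x‖)/(2*B*‖x‖^2)) with hfχ_def
  have hfχm : Measurable fχ :=
    Measurable.indicator ((Real.measurable_exp.comp (measurable_norm.const_mul θ)).div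
      ((measurable_norm.pow_const 2).const_mul (2*B))) (measurable_norm measurableSet_Ici)
  set χ : Ω → ℝ := Set.indicator E (fun ω' => Real.exp (θ*‖X ω'‖)/(2*B*‖X ω'‖^2)) with hχ_def
  have hχ_comp : χ = fun ω => fχ (X ω) := by
    funext ω
    rw [hχ_def, hfχ_def]
    by_cases hω : ω ∈ E
    · rw [Set.indicator_of_mem hω, Set.indicator_of_mem (by exact hω)]
    · rw [Set.indicator_of_notMem hω, Set.indicator_of_notMem (by exact hω)]
  have hχm : Measurable χ := by rw [hχ_comp]; exact hfχm.comp hXm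
  have hχbd : ∀ᵐ ω ∂μ, |χ ω| ≤ Real.exp (θ*CX)/(2*B*R^2) := by
    filter_upwards [hXbd] with ω hX
    rw [hχ_def]
    by_cases hω : ω ∈ E
    · rw [Set.indicator_of_mem hω]
      have haR : R ≤ ‖X ω‖ := hω
      have hapos : 0 < ‖X ω‖ := lt_of_lt_of_le hR haR
      rw [abs_of_nonneg (by positivity)]
      apply div_le_div₀ (by positivity)
        (Real.exp_le_exp.2 (mul_le_mul_of_nonneg_left hX hθ.le)) (by positivity)
      nlinarith [hB, mul_le_mul haR haR hR.le (norm_nonneg (X ω))]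
    · rw [Set.indicator_of_notMem hω]; simp; positivity
  have mcoord : ∀ i : Fin p, Measurable (fun x : EuclideanSpace ℝ (Fin p) => x i) :=
    fun i => (EuclideanSpace.proj (𝕜 := ℝ) i).continuous.measurable
  have hcoordX : ∀ᵐ ω ∂μ, ∀ i, |X ω i| ≤ CX := by
    filter_upwards [hXbd] with ω hX i
    calc |X ω i| ≤ ‖X ω‖ := by
          have := EuclideanSpace.norm_eq (X ω)
          rw [this]
          have h1 : |X ω i| = Real.sqrt (‖X ω i‖^2) := by
            rw [Real.sqrt_sq_eq_abs]; simp [Real.norm_eq_abs, abs_abs]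
          rw [h1]
          refine Real.sqrt_le_sqrt ?_
          exact Finset.single_le_sum (f := fun j => ‖X ω j‖^2) (fun j _ => sq_nonneg _)
            (Finset.mem_univ i)
      _ ≤ CX := hX
  have hcoordD : ∀ᵐ ω ∂μ, ∀ i, |D ω i| ≤ 2*B := by
    filter_upwards [hDbd] with ω hD i
    calc |D ω i| ≤ ‖D ω‖ := by
          rw [EuclideanSpace.norm_eq]
          have h1 : |D ω i| = Real.sqrt (‖D ω i‖^2) := by
            rw [Real.sqrt_sq_eq_abs]; simp [Real.norm_eq_abs, abs_abs]
          rw [h1]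
          refine Real.sqrt_le_sqrt ?_
          exact Finset.single_le_sum (f := fun j => ‖D ω j‖^2) (fun j _ => sq_nonneg _)
            (Finset.mem_univ i)
      _ ≤ 2*B := hD
  -- integrability helper
  have hIntBdd : ∀ (f : Ω → ℝ) (c : ℝ), AEStronglyMeasurable f μ →
      (∀ᵐ ω ∂μ, |f ω| ≤ c) → Integrable f μ := by
    intro f c hm hb
    exact Integrable.mono' (integrable_const c) hm (by simpa [Real.norm_eq_abs] using hb)
  -- the per-(i,j) independence factorization
  have hUmeas : ∀ i j : Fin p, Measurable (fun ω => χ ω * (X ω i * X ω j)) := by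
    intro i j
    exact hχm.mul (((mcoord i).comp hXm).mul ((mcoord j).comp hXm))
  have hVmeas : ∀ i j : Fin p, Measurable (fun ω => D ω i * D ω j) := by
    intro i j
    exact ((mcoord i).comp hDm).mul ((mcoord j).comp hDm)
  have hUint : ∀ i j : Fin p, Integrable (fun ω => χ ω * (X ω i * X ω j)) μ := by
    intro i j
    refine hIntBdd _ (Real.exp (θ*CX)/(2*B*R^2) * (CX*CX)) ((hUmeas i j).aestronglyMeasurable) ?_
    filter_upwards [hχbd, hcoordX] with ω h1 h2
    rw [abs_mul, abs_mul]
    apply mul_le_mul h1 (mul_le_mul (h2 i) (h2 j) (abs_nonneg _) hCX)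
      (by positivity) (by positivity)
  have hVint : ∀ i j : Fin p, Integrable (fun ω => D ω i * D ω j) μ := by
    intro i j
    refine hIntBdd _ ((2*B)*(2*B)) ((hVmeas i j).aestronglyMeasurable) ?_
    filter_upwards [hcoordD] with ω h2
    rw [abs_mul]
    exact mul_le_mul (h2 i) (h2 j) (abs_nonneg _) (by positivity)
  have hterm : ∀ i j : Fin p, ∫ ω, (χ ω * (X ω i * X ω j)) * (D ω i * D ω j) ∂μ
      = (∫ ω, χ ω * (X ω i * X ω j) ∂μ) * (if i = j then (2:ℝ) else 0) := by
    intro i j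
    have hind : IndepFun (fun ω => χ ω * (X ω i * X ω j)) (fun ω => D ω i * D ω j) μ := by
      have hfU : Measurable (fun x : EuclideanSpace ℝ (Fin p) => fχ x * (x i * x j)) :=
        hfχm.mul ((mcoord i).mul (mcoord j))
      have hfV : Measurable (fun x : EuclideanSpace ℝ (Fin p) => x i * x j) :=
        (mcoord i).mul (mcoord j)
      have := hXD.comp hfU hfV
      have hUeq : (fun x : EuclideanSpace ℝ (Fin p) => fχ x * (x i * x j)) ∘ X
          = fun ω => χ ω * (X ω i * X ω j) := by
        funext ω; simp [Function.comp, hχ_comp]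
      have hVeq : (fun x : EuclideanSpace ℝ (Fin p) => x i * x j) ∘ D
          = fun ω => D ω i * D ω j := by
        funext ω; simp [Function.comp]
      rwa [hUeq, hVeq] at this
    have := hind.integral_mul_eq_mul_integral (hUint i j).aestronglyMeasurable (hVint i j).aestronglyMeasurable
    rw [← hDcov i j]
    simpa [Pi.mul_apply] using this
  -- expand inner product
  have hinner : ∀ ω, (inner ℝ (X ω) (D ω) : ℝ) = ∑ i, X ω i * D ω i := by
    intro ω; simp [PiLp.inner_apply, RCLike.inner_apply, mul_comm]
  have hrep : ∀ ω, χ ω * (inner ℝ (X ω) (D ω) : ℝ)^2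
      = ∑ i, ∑ j, (χ ω * (X ω i * X ω j)) * (D ω i * D ω j) := by
    intro ω
    rw [hinner, sq, Finset.sum_mul_sum]
    rw [Finset.mul_sum]
    refine Finset.sum_congr rfl fun i _ => ?_
    rw [Finset.mul_sum]
    exact Finset.sum_congr rfl fun j _ => by ring
  have hsumint : ∀ i : Fin p, Integrable (fun ω => ∑ j, (χ ω * (X ω i * X ω j)) * (D ω i * D ω j)) μ := by
    intro i
    apply integrable_finset_sum
    intro j _
    refine hIntBdd _ (Real.exp (θ*CX)/(2*B*R^2) * (CX*CX) * ((2*B)*(2*B))) ?_ ?_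
    · exact ((hUmeas i j).mul (hVmeas i j)).aestronglyMeasurable
    · filter_upwards [hχbd, hcoordX, hcoordD] with ω h1 h2 h3
      rw [abs_mul, abs_mul, abs_mul, abs_mul]
      apply mul_le_mul
      · apply mul_le_mul h1 (mul_le_mul (h2 i) (h2 j) (abs_nonneg _) hCX) (by positivity) (by positivity)
      · exact mul_le_mul (h3 i) (h3 j) (abs_nonneg _) (by positivity)
      · positivity
      · positivity
  -- compute ∫ χ * φ^2
  have hstep2 : ∫ ω, χ ω * (inner ℝ (X ω) (D ω) : ℝ)^2 ∂μ
      = (1/B) * ∫ ω, Set.indicator E (fun ω' => Real.exp (θ*‖X ω'‖)) ω ∂μ := by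
    have e1 : ∫ ω, χ ω * (inner ℝ (X ω) (D ω) : ℝ)^2 ∂μ
        = ∑ i, ∑ j, ∫ ω, (χ ω * (X ω i * X ω j)) * (D ω i * D ω j) ∂μ := by
      rw [show (fun ω => χ ω * (inner ℝ (X ω) (D ω) : ℝ)^2)
          = fun ω => ∑ i, ∑ j, (χ ω * (X ω i * X ω j)) * (D ω i * D ω j) from funext hrep]
      rw [integral_finset_sum _ (fun i _ => hsumint i)]
      refine Finset.sum_congr rfl fun i _ => ?_
      apply integral_finset_sum
      intro j _
      refine hIntBdd _ (Real.exp (θ*CX)/(2*B*R^2) * (CX*CX) * ((2*B)*(2*B))) ?_ ?_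
      · exact ((hUmeas i j).mul (hVmeas i j)).aestronglyMeasurable
      · filter_upwards [hχbd, hcoordX, hcoordD] with ω h1 h2 h3
        rw [abs_mul, abs_mul, abs_mul, abs_mul]
        apply mul_le_mul
        · apply mul_le_mul h1 (mul_le_mul (h2 i) (h2 j) (abs_nonneg _) hCX) (by positivity) (by positivity)
        · exact mul_le_mul (h3 i) (h3 j) (abs_nonneg _) (by positivity)
        · positivity
        · positivity
    rw [e1]
    have e2 : ∀ i : Fin p, ∑ j, ∫ ω, (χ ω * (X ω i * X ω j)) * (D ω i * D ω j) ∂μ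
        = 2 * ∫ ω, χ ω * (X ω i * X ω i) ∂μ := by
      intro i
      rw [Finset.sum_congr rfl (fun j _ => hterm i j)]
      rw [Finset.sum_eq_single i]
      · rw [if_pos rfl]; ring
      · intro j _ hji
        simp [Ne.symm hji]
      · intro h; exact absurd (Finset.mem_univ i) h
    rw [Finset.sum_congr rfl (fun i _ => e2 i)]
    rw [← Finset.mul_sum]
    have e3 : ∑ i : Fin p, ∫ ω, χ ω * (X ω i * X ω i) ∂μ
        = ∫ ω, χ ω * ‖X ω‖^2 ∂μ := by
      rw [← integral_finset_sum]
      · congr 1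
        funext ω
        rw [← Finset.mul_sum]
        congr 1
        rw [EuclideanSpace.norm_eq, Real.sq_sqrt (by positivity)]
        refine Finset.sum_congr rfl fun i _ => ?_
        simp [Real.norm_eq_abs, sq_abs, sq]
      · intro i _
        refine hIntBdd _ (Real.exp (θ*CX)/(2*B*R^2) * (CX*CX)) ((hUmeas i i).aestronglyMeasurable) ?_
        filter_upwards [hχbd, hcoordX] with ω h1 h2
        rw [abs_mul, abs_mul]
        apply mul_le_mul h1 (mul_le_mul (h2 i) (h2 i) (abs_nonneg _) hCX)
          (by positivity) (by positivity)
    rw [e3]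
    have e4 : (fun ω => χ ω * ‖X ω‖^2)
        = fun ω => (1/(2*B)) * Set.indicator E (fun ω' => Real.exp (θ*‖X ω'‖)) ω := by
      funext ω
      rw [hχ_def]
      by_cases hω : ω ∈ E
      · rw [Set.indicator_of_mem hω, Set.indicator_of_mem hω]
        have hapos : 0 < ‖X ω‖ := lt_of_lt_of_le hR hω
        field_simp
      · rw [Set.indicator_of_notMem hω, Set.indicator_of_notMem hω]; ring
    rw [e4, integral_const_mul]
    ring
  -- step 1: pointwise bound and integral_mono
  have hintχφ : Integrable (fun ω => χ ω * (inner ℝ (X ω) (D ω) : ℝ)^2) μ := by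
    refine hIntBdd _ (Real.exp (θ*CX)/(2*B*R^2) * (CX*(2*B))^2) ?_ ?_
    · exact ((hχm.mul ((hXm.inner hDm).pow_const 2))).aestronglyMeasurable
    · filter_upwards [hχbd, hXbd, hDbd] with ω h1 h2 h3
      rw [abs_mul]
      apply mul_le_mul h1 _ (abs_nonneg _) (by positivity)
      rw [abs_pow]
      have : |(inner ℝ (X ω) (D ω) : ℝ)| ≤ CX * (2*B) := by
        calc |(inner ℝ (X ω) (D ω) : ℝ)| ≤ ‖X ω‖ * ‖D ω‖ := abs_real_inner_le_norm _ _
          _ ≤ CX * (2*B) := mul_le_mul h2 h3 (norm_nonneg _) hCX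
      exact pow_le_pow_left₀ (abs_nonneg _) this 2
  have hintRHS : Integrable (fun ω => Set.indicator E (fun ω' => Real.exp (θ*‖X ω'‖)/‖X ω'‖) ω
      * |(inner ℝ (X ω) (D ω) : ℝ)|) μ := by
    refine hIntBdd _ (Real.exp (θ*CX)/R * (CX*(2*B))) ?_ ?_
    · refine (Measurable.aestronglyMeasurable ?_)
      exact (Measurable.indicator ((Real.measurable_exp.comp (hXm.norm.const_mul θ)).div hXm.norm) hEmeas).mul
        (hXm.inner hDm).abs
    · filter_upwards [hXbd, hDbd] with ω h2 h3
      rw [abs_mul, abs_abs]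
      have hφbd : |(inner ℝ (X ω) (D ω) : ℝ)| ≤ CX * (2*B) := by
        calc |(inner ℝ (X ω) (D ω) : ℝ)| ≤ ‖X ω‖ * ‖D ω‖ := abs_real_inner_le_norm _ _
          _ ≤ CX * (2*B) := mul_le_mul h2 h3 (norm_nonneg _) hCX
      apply mul_le_mul _ hφbd (abs_nonneg _) (by positivity)
      by_cases hω : ω ∈ E
      · rw [Set.indicator_of_mem hω]
        have hapos : 0 < ‖X ω‖ := lt_of_lt_of_le hR hω
        rw [abs_of_nonneg (by positivity)]
        apply div_le_div₀ (by positivity) (Real.exp_le_exp.2 (mul_le_mul_of_nonneg_left h2 hθ.le)) hR hω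
      · rw [Set.indicator_of_notMem hω]; simp; positivity
  have hptwise : ∀ᵐ ω ∂μ, χ ω * (inner ℝ (X ω) (D ω) : ℝ)^2
      ≤ Set.indicator E (fun ω' => Real.exp (θ*‖X ω'‖)/‖X ω'‖) ω * |(inner ℝ (X ω) (D ω) : ℝ)| := by
    filter_upwards [hXbd, hDbd] with ω h2 h3
    by_cases hω : ω ∈ E
    · rw [hχ_def, Set.indicator_of_mem hω, Set.indicator_of_mem hω]
      have hapos : 0 < ‖X ω‖ := lt_of_lt_of_le hR hω
      set φv := (inner ℝ (X ω) (D ω) : ℝ)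
      have hφbd : |φv| ≤ ‖X ω‖ * (2*B) := by
        calc |φv| ≤ ‖X ω‖ * ‖D ω‖ := abs_real_inner_le_norm _ _
          _ ≤ ‖X ω‖ * (2*B) := mul_le_mul_of_nonneg_left h3 (norm_nonneg _)
      have h1 : φv^2 ≤ |φv| * (‖X ω‖ * (2*B)) := by
        nlinarith [sq_abs φv, abs_nonneg φv]
      calc Real.exp (θ*‖X ω‖)/(2*B*‖X ω‖^2) * φv^2
          ≤ Real.exp (θ*‖X ω‖)/(2*B*‖X ω‖^2) * (|φv| * (‖X ω‖ * (2*B))) :=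
            mul_le_mul_of_nonneg_left h1 (by positivity)
        _ = Real.exp (θ*‖X ω‖)/‖X ω‖ * |φv| := by field_simp
    · rw [hχ_def, Set.indicator_of_notMem hω, Set.indicator_of_notMem hω]
      simp
  calc (1/B) * ∫ ω, Set.indicator E (fun ω' => Real.exp (θ*‖X ω'‖)) ω ∂μ
      = ∫ ω, χ ω * (inner ℝ (X ω) (D ω) : ℝ)^2 ∂μ := hstep2.symm
    _ ≤ ∫ ω, Set.indicator E (fun ω' => Real.exp (θ*‖X ω'‖)/‖X ω'‖) ω
          * |(inner ℝ (X ω) (D ω) : ℝ)| ∂μ := integral_mono_ae hintχφ hintRHS hptwise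


lemma measurable_realSign : Measurable Real.sign := by
  have h : Real.sign = fun x : ℝ => if x < 0 then (-1:ℝ) else if 0 < x then 1 else 0 := by
    funext x; rfl
  rw [h]
  exact Measurable.ite measurableSet_Iio measurable_const
    (Measurable.ite measurableSet_Ioi measurable_const measurable_const)

lemma drift_arith (B q θ a fD phi up um pp pm : ℝ)
    (hB : 0 < B) (hq2 : 0 < 2*q - 1)
    (hθpos : 0 < θ) (hθ1 : θ ≤ 1/(2*B)) (hθ2 : θ ≤ (2*q-1)/(16*B^3))
    (ha : 16*B^3/(2*q-1) ≤ a)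
    (hup : up - a ≤ (phi + fD^2/2)/a) (hum : um - a ≤ (-phi + fD^2/2)/a)
    (haup : |up - a| ≤ fD) (haum : |um - a| ≤ fD)
    (hfD : fD ≤ 2*B)
    (hpp : 0 ≤ pp) (hpm : 0 ≤ pm) (hsum : pp + pm = 1)
    (hdiff : pp - pm = (1 - 2*q) * Real.sign phi) :
    pp * Real.exp (θ * up) + pm * Real.exp (θ * um)
      ≤ (1 + (3/8)*(θ*((2*q-1)/B))) * Real.exp (θ*a)
        - θ*(2*q-1) * (Real.exp (θ*a) * |phi| / a) := by
  have hapos : 0 < a := lt_of_lt_of_le (by positivity) ha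
  have hfD0 : 0 ≤ fD := le_trans (abs_nonneg _) haum
  have hB3 : (0:ℝ) < B^3 := by positivity
  set xp : ℝ := θ * (up - a) with hxp_def
  set xm : ℝ := θ * (um - a) with hxm_def
  have hxpabs : |xp| ≤ 1 := by
    rw [hxp_def, abs_mul, abs_of_pos hθpos]
    calc θ * |up - a| ≤ θ * (2*B) := by
          apply mul_le_mul_of_nonneg_left (le_trans haup hfD) hθpos.le
      _ ≤ (1/(2*B)) * (2*B) := by
          apply mul_le_mul_of_nonneg_right hθ1 (by positivity)
      _ = 1 := by field_simp
  have hxmabs : |xm| ≤ 1 := by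
    rw [hxm_def, abs_mul, abs_of_pos hθpos]
    calc θ * |um - a| ≤ θ * (2*B) := by
          apply mul_le_mul_of_nonneg_left (le_trans haum hfD) hθpos.le
      _ ≤ (1/(2*B)) * (2*B) := by
          apply mul_le_mul_of_nonneg_right hθ1 (by positivity)
      _ = 1 := by field_simp
  have h1 : Real.exp (θ * up) ≤ Real.exp (θ*a) * (1 + xp + xp^2) := by
    have : θ * up = θ * a + xp := by rw [hxp_def]; ring
    rw [this, Real.exp_add]
    exact mul_le_mul_of_nonneg_left (exp_quad hxpabs) (Real.exp_pos _).le
  have h2 : Real.exp (θ * um) ≤ Real.exp (θ*a) * (1 + xm + xm^2) := by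
    have : θ * um = θ * a + xm := by rw [hxm_def]; ring
    rw [this, Real.exp_add]
    exact mul_le_mul_of_nonneg_left (exp_quad hxmabs) (Real.exp_pos _).le
  have hsq : ∀ y : ℝ, |y - a| ≤ fD → (θ*(y-a))^2 ≤ 4*θ^2*B^2 := by
    intro y hy
    have h := abs_le.1 hy
    have e : (y-a)^2 ≤ (2*B)^2 := by nlinarith
    calc (θ*(y-a))^2 = θ^2 * (y-a)^2 := by ring
      _ ≤ θ^2 * (2*B)^2 := mul_le_mul_of_nonneg_left e (sq_nonneg θ)
      _ = 4*θ^2*B^2 := by ring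
  have hxp2 : xp^2 ≤ 4*θ^2*B^2 := by rw [hxp_def]; exact hsq up haup
  have hxm2 : xm^2 ≤ 4*θ^2*B^2 := by rw [hxm_def]; exact hsq um haum
  have hkey : pp*(up - a) + pm*(um - a) ≤ ((1-2*q)*|phi| + fD^2/2)/a := by
    have e1 : pp*(up-a) ≤ pp*((phi + fD^2/2)/a) := mul_le_mul_of_nonneg_left hup hpp
    have e2 : pm*(um-a) ≤ pm*((-phi + fD^2/2)/a) := mul_le_mul_of_nonneg_left hum hpm
    have e3 : pp*((phi+fD^2/2)/a) + pm*((-phi+fD^2/2)/a)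
        = ((pp-pm)*phi + (pp+pm)*(fD^2/2))/a := by field_simp; ring
    have e4 : (pp-pm)*phi = (1-2*q)*|phi| := by
      rw [hdiff, mul_assoc, real_sign_mul_self]
    rw [e4, hsum, one_mul] at e3
    linarith
  have hexp : (0:ℝ) < Real.exp (θ*a) := Real.exp_pos _
  have hphia : 0 ≤ |phi|/a := by positivity
  have c4 : 4*θ^2*B^2 ≤ (θ*((2*q-1)/B))/4 := by
    have h : 4*θ*B^2 ≤ (2*q-1)/(4*B) := by
      calc 4*θ*B^2 ≤ 4*((2*q-1)/(16*B^3))*B^2 := by nlinarith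
        _ = (2*q-1)/(4*B) := by field_simp; ring
    calc 4*θ^2*B^2 = θ * (4*θ*B^2) := by ring
      _ ≤ θ * ((2*q-1)/(4*B)) := mul_le_mul_of_nonneg_left h hθpos.le
      _ = (θ*((2*q-1)/B))/4 := by field_simp
  have c8 : θ * ((fD^2/2)/a) ≤ (θ*((2*q-1)/B))/8 := by
    have hia : 1/a ≤ (2*q-1)/(16*B^3) := by
      rw [div_le_div_iff₀ hapos (by positivity)]
      calc 1 * (16*B^3) = (16*B^3/(2*q-1)) * (2*q-1) := by field_simp
        _ ≤ a * (2*q-1) := mul_le_mul_of_nonneg_right ha hq2.le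
        _ = (2*q-1) * a := mul_comm _ _
    have h1 : fD^2/2 ≤ 2*B^2 := by nlinarith
    have h2 : (fD^2/2)/a ≤ (2*B^2) * (1/a) := by
      rw [div_eq_mul_one_div]
      apply mul_le_mul h1 le_rfl (by positivity) (by positivity)
    have h3 : (2*B^2) * (1/a) ≤ (2*B^2) * ((2*q-1)/(16*B^3)) := by
      apply mul_le_mul_of_nonneg_left hia (by positivity)
    have h4 : (2*B^2) * ((2*q-1)/(16*B^3)) = ((2*q-1)/B)/8 := by field_simp; ring
    calc θ * ((fD^2/2)/a) ≤ θ * (((2*q-1)/B)/8) := by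
          apply mul_le_mul_of_nonneg_left (by linarith) hθpos.le
      _ = (θ*((2*q-1)/B))/8 := by ring
  calc pp * Real.exp (θ * up) + pm * Real.exp (θ * um)
      ≤ pp * (Real.exp (θ*a) * (1 + xp + xp^2)) + pm * (Real.exp (θ*a) * (1 + xm + xm^2)) :=
        add_le_add (mul_le_mul_of_nonneg_left h1 hpp) (mul_le_mul_of_nonneg_left h2 hpm)
    _ = Real.exp (θ*a) * ((pp + pm) + (pp*xp + pm*xm) + (pp*xp^2 + pm*xm^2)) := by ring
    _ ≤ Real.exp (θ*a) * (1 + θ*(((1-2*q)*|phi| + fD^2/2)/a) + 4*θ^2*B^2) := by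
        apply mul_le_mul_of_nonneg_left _ hexp.le
        have i1 : pp*xp + pm*xm = θ * (pp*(up-a) + pm*(um-a)) := by
          rw [hxp_def, hxm_def]; ring
        have i2 : pp*xp + pm*xm ≤ θ*(((1-2*q)*|phi| + fD^2/2)/a) := by
          rw [i1]; exact mul_le_mul_of_nonneg_left hkey hθpos.le
        have i3 : pp*xp^2 + pm*xm^2 ≤ 4*θ^2*B^2 := by nlinarith
        linarith [hsum]
    _ ≤ (1 + (3/8)*(θ*((2*q-1)/B))) * Real.exp (θ*a)
        - θ*(2*q-1) * (Real.exp (θ*a) * |phi| / a) := by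
        have expand : Real.exp (θ*a) * (1 + θ*(((1-2*q)*|phi| + fD^2/2)/a) + 4*θ^2*B^2)
            = Real.exp (θ*a) + Real.exp (θ*a) * (θ * ((fD^2/2)/a))
              + Real.exp (θ*a) * (4*θ^2*B^2)
              - θ*(2*q-1) * (Real.exp (θ*a) * |phi| / a) := by
          field_simp; ring
        rw [expand]
        have j1 : Real.exp (θ*a) * (θ * ((fD^2/2)/a)) ≤ Real.exp (θ*a) * ((θ*((2*q-1)/B))/8) :=
          mul_le_mul_of_nonneg_left c8 hexp.le
        have j2 : Real.exp (θ*a) * (4*θ^2*B^2) ≤ Real.exp (θ*a) * ((θ*((2*q-1)/B))/4) :=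
          mul_le_mul_of_nonneg_left c4 hexp.le
        nlinarith [j1, j2]


/-- The σ-algebra generated by the CAR process up to step `2k`: the signs
`S 0, …, S (k-1)` of the first `k` pairs and the covariates `ξ 0, …, ξ (2k-1)`. -/
def carPastSigma {Ω E : Type*} [MeasurableSpace E]
    (S : ℕ → Ω → ℝ) (ξ : ℕ → Ω → E) (k : ℕ) : MeasurableSpace Ω :=
  (⨆ j ∈ Finset.range k, MeasurableSpace.comap (S j) inferInstance) ⊔
    (⨆ j ∈ Finset.range (2 * k), MeasurableSpace.comap (ξ j) inferInstance)

/-- **Lemma A.1: boundedness of the CAR imbalance process**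
(of "Cluster-Adaptive Network A/B Testing").

Here `H k = η_{2k}` is the whitened imbalance process of cluster-adaptive
randomization with biased-coin parameter `q ∈ (1/2, 1)`, driven by i.i.d. bounded
standardized covariates `ξ` (mean `0`, covariance `I_p`).  Then `(‖η_{2k}‖²)_k` is
bounded in probability, and consequently `M̃_m = ‖η_m‖²/m = O_p(1/m)` along the even
indices `m = 2k`. -/
theorem car_imbalance_bounded_in_probability
    {Ω : Type*} [MeasurableSpace Ω] (μ : Measure Ω) [IsProbabilityMeasure μ]
    {p : ℕ} (B q : ℝ) (hB : 0 < B) (hq : 1 / 2 < q) (hq1 : q < 1)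
    -- i.i.d. standardized covariates: mean 0, covariance `I_p`, bounded by `B`
    (ξ : ℕ → Ω → EuclideanSpace ℝ (Fin p))
    (hξmeas : ∀ j, Measurable (ξ j))
    (hξindep : iIndepFun ξ μ)
    (hξident : ∀ j j', IdentDistrib (ξ j) (ξ j') μ μ)
    (hξmean : ∀ j, ∫ ω, ξ j ω ∂μ = 0)
    (hξcov : ∀ j, ∀ a b : Fin p,
      ∫ ω, ξ j ω a * ξ j ω b ∂μ = if a = b then (1 : ℝ) else 0)
    (hξbdd : ∀ j, ∀ᵐ ω ∂μ, ‖ξ j ω‖ ≤ B)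
    -- the `{-1,1}`-valued signs
    (S : ℕ → Ω → ℝ)
    (hSmeas : ∀ k, Measurable (S k))
    (hSval : ∀ k ω, S k ω = 1 ∨ S k ω = -1)
    -- the imbalance process `H k = η_{2k}`
    (H : ℕ → Ω → EuclideanSpace ℝ (Fin p))
    (hH0 : ∀ ω, H 0 ω = 0)
    (hHrec : ∀ k ω, H (k + 1) ω = H k ω + S k ω • (ξ (2 * k) ω - ξ (2 * k + 1) ω))
    -- the current pair of covariates is independent of the past
    (hpair_indep : ∀ k, Indep
      (MeasurableSpace.comap (fun ω => (ξ (2 * k) ω, ξ (2 * k + 1) ω)) inferInstance)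
      (carPastSigma S ξ k) μ)
    -- conditional law of the sign given the past and the current pair
    (hS1 : ∀ k, ∀ᵐ ω ∂μ,
      (inner ℝ (H k ω) (ξ (2 * k) ω - ξ (2 * k + 1) ω) : ℝ) ≠ 0 →
      (μ⟦{ω' | S k ω' =
            -Real.sign (inner ℝ (H k ω') (ξ (2 * k) ω' - ξ (2 * k + 1) ω'))} |
          carPastSigma S ξ k ⊔
            MeasurableSpace.comap (fun ω => (ξ (2 * k) ω, ξ (2 * k + 1) ω))
              inferInstance⟧) ω = q)
    (hS0 : ∀ k, ∀ᵐ ω ∂μ,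
      (inner ℝ (H k ω) (ξ (2 * k) ω - ξ (2 * k + 1) ω) : ℝ) = 0 →
      (μ⟦{ω' | S k ω' = 1} |
          carPastSigma S ξ k ⊔
            MeasurableSpace.comap (fun ω => (ξ (2 * k) ω, ξ (2 * k + 1) ω))
              inferInstance⟧) ω = 1 / 2) :
    (∀ δ : ℝ, 0 < δ → ∃ K : ℝ, 0 < K ∧ ∀ k : ℕ,
        μ {ω | K < ‖H k ω‖ ^ 2} ≤ ENNReal.ofReal δ)
    ∧ (∀ δ : ℝ, 0 < δ → ∃ K : ℝ, 0 < K ∧ ∀ k : ℕ, 1 ≤ k →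
        μ {ω | K / (2 * k : ℝ) < ‖H k ω‖ ^ 2 / (2 * k : ℝ)} ≤ ENNReal.ofReal δ) := by
  classical
  have hq2 : 0 < 2 * q - 1 := by linarith
  have hB3 : (0:ℝ) < B^3 := by positivity
  set ε : ℝ := (2*q-1)/B with hε_def
  have hεpos : 0 < ε := div_pos hq2 hB
  set θ : ℝ := min (min (1/(2*B)) ((2*q-1)/(16*B^3))) (B/(2*q-1)) with hθ_def
  have hθpos : 0 < θ := by
    refine lt_min (lt_min (by positivity) (by positivity)) (by positivity)
  have hθ1 : θ ≤ 1/(2*B) := le_trans (min_le_left _ _) (min_le_left _ _)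
  have hθ2 : θ ≤ (2*q-1)/(16*B^3) := le_trans (min_le_left _ _) (min_le_right _ _)
  have hθ3 : θ * ε ≤ 1 := by
    have h := min_le_right (min (1/(2*B)) ((2*q-1)/(16*B^3))) (B/(2*q-1))
    rw [← hθ_def] at h
    have : θ * ε ≤ (B/(2*q-1)) * ((2*q-1)/B) := by
      apply mul_le_mul h le_rfl hεpos.le (by positivity)
    calc θ * ε ≤ (B/(2*q-1)) * ((2*q-1)/B) := this
      _ = 1 := by field_simp
  set R : ℝ := 16*B^3/(2*q-1) with hR_def
  have hRpos : 0 < R := by positivity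
  set ρ : ℝ := 1 - θ*ε/2 with hρ_def
  have hρ0 : 0 ≤ ρ := by simp only [hρ_def]; linarith
  have hρ1 : ρ < 1 := by
    simp only [hρ_def]
    nlinarith [mul_pos hθpos hεpos]
  set b : ℝ := Real.exp (θ*(R+2*B)) with hb_def
  have hbpos : 0 < b := Real.exp_pos _
  set M : ℝ := max 1 (b/(1-ρ)) with hM_def
  have hM1 : 1 ≤ M := le_max_left _ _
  have hMb : b/(1-ρ) ≤ M := le_max_right _ _
  have hMpos : 0 < M := lt_of_lt_of_le one_pos hM1
  -- σ-algebra facts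
  have hGle : ∀ k, carPastSigma S ξ k ≤ ‹MeasurableSpace Ω› := by
    intro k
    refine sup_le ?_ ?_
    · exact iSup_le fun j => iSup_le fun _ => measurable_iff_comap_le.1 (hSmeas j)
    · exact iSup_le fun j => iSup_le fun _ => measurable_iff_comap_le.1 (hξmeas j)
  have hGmono : ∀ k, carPastSigma S ξ k ≤ carPastSigma S ξ (k+1) := by
    intro k
    refine sup_le_sup ?_ ?_ <;>
    · exact biSup_mono fun j hj => Finset.mem_range.2 (by
        have := Finset.mem_range.1 hj; omega)
  have hprmeas : ∀ k, Measurable (fun ω => (ξ (2*k) ω, ξ (2*k+1) ω)) :=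
    fun k => (hξmeas _).prodMk (hξmeas _)
  have hFle : ∀ k, (carPastSigma S ξ k ⊔
      MeasurableSpace.comap (fun ω => (ξ (2*k) ω, ξ (2*k+1) ω)) inferInstance)
      ≤ ‹MeasurableSpace Ω› :=
    fun k => sup_le (hGle k) (measurable_iff_comap_le.1 (hprmeas k))
  -- measurability of H
  have hHGmeas : ∀ k, Measurable[carPastSigma S ξ k] (H k) := by
    intro k
    induction k with
    | zero =>
      have h0 : H 0 = fun _ => 0 := funext hH0
      rw [h0]; exact measurable_const
    | succ k ih =>
      have h1 : H (k+1) = fun ω => H k ω + S k ω • (ξ (2*k) ω - ξ (2*k+1) ω) :=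
        funext (hHrec k)
      rw [h1]
      have hS : Measurable[carPastSigma S ξ (k+1)] (S k) := by
        refine measurable_iff_comap_le.2 (le_trans ?_ le_sup_left)
        exact le_biSup (f := fun j => MeasurableSpace.comap (S j) inferInstance) (Finset.mem_range.2 (Nat.lt_succ_self k))
      have hξmem : ∀ j, j < 2*(k+1) → Measurable[carPastSigma S ξ (k+1)] (ξ j) := by
        intro j hj
        refine measurable_iff_comap_le.2 (le_trans ?_ le_sup_right)
        exact le_biSup (f := fun j => MeasurableSpace.comap (ξ j) inferInstance)
          (Finset.mem_range.2 hj)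
      have hξa := hξmem (2*k) (by omega)
      have hξb := hξmem (2*k+1) (by omega)
      exact (ih.mono (hGmono k) le_rfl).add (hS.smul (hξa.sub hξb))
  have hHmeas : ∀ k, Measurable (H k) := fun k => (hHGmeas k).mono (hGle k) le_rfl
  -- a.e. bounds
  have habd : ∀ k, ∀ᵐ ω ∂μ, ‖H k ω‖ ≤ 2*B*k := by
    intro k
    induction k with
    | zero => filter_upwards with ω; simp [hH0 ω]
    | succ k ih =>
      filter_upwards [ih, hξbdd (2*k), hξbdd (2*k+1)] with ω h1 h2 h3
      rw [hHrec k ω]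
      have hs : ‖S k ω‖ = 1 := by rcases hSval k ω with h | h <;> simp [h]
      calc ‖H k ω + S k ω • (ξ (2*k) ω - ξ (2*k+1) ω)‖
          ≤ ‖H k ω‖ + ‖S k ω • (ξ (2*k) ω - ξ (2*k+1) ω)‖ := norm_add_le _ _
        _ = ‖H k ω‖ + ‖ξ (2*k) ω - ξ (2*k+1) ω‖ := by rw [norm_smul, hs, one_mul]
        _ ≤ 2*B*k + (‖ξ (2*k) ω‖ + ‖ξ (2*k+1) ω‖) := by
            have := norm_sub_le (ξ (2*k) ω) (ξ (2*k+1) ω); linarith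
        _ ≤ 2*B*(((k+1 : ℕ)) : ℝ) := by push_cast; linarith
  have hDbd : ∀ k, ∀ᵐ ω ∂μ, ‖ξ (2*k) ω - ξ (2*k+1) ω‖ ≤ 2*B := by
    intro k
    filter_upwards [hξbdd (2*k), hξbdd (2*k+1)] with ω h2 h3
    have := norm_sub_le (ξ (2*k) ω) (ξ (2*k+1) ω); linarith
  -- integrability helper
  have hIntBdd : ∀ (f : Ω → ℝ) (c : ℝ), AEStronglyMeasurable f μ →
      (∀ᵐ ω ∂μ, |f ω| ≤ c) → Integrable f μ := by
    intro f c hm hb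
    exact Integrable.mono' (integrable_const c) hm (by simpa [Real.norm_eq_abs] using hb)
  -- integrability of the exponential at each step
  have hexpint : ∀ k, Integrable (fun ω => Real.exp (θ * ‖H k ω‖)) μ := by
    intro k
    refine hIntBdd _ (Real.exp (θ * (2*B*k))) ?_ ?_
    · exact (Real.measurable_exp.comp ((hHmeas k).norm.const_mul θ)).aestronglyMeasurable
    · filter_upwards [habd k] with ω h1
      rw [abs_of_pos (Real.exp_pos _)]
      exact Real.exp_le_exp.2 (mul_le_mul_of_nonneg_left h1 hθpos.le)
  have mcoord : ∀ i : Fin p, Measurable (fun x : EuclideanSpace ℝ (Fin p) => x i) :=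
    fun i => (EuclideanSpace.proj (𝕜 := ℝ) i).continuous.measurable
  have hξint : ∀ n, Integrable (ξ n) μ := by
    intro n
    refine Integrable.mono' (integrable_const B) ((hξmeas n).aestronglyMeasurable) ?_
    filter_upwards [hξbdd n] with ω h; exact h
  have hcoordmean : ∀ n, ∀ i : Fin p, ∫ ω, ξ n ω i ∂μ = 0 := by
    intro n i
    have h := (EuclideanSpace.proj (𝕜 := ℝ) i).integral_comp_comm (hξint n)
    rw [hξmean n] at h
    simpa using h
  have hcoordbd : ∀ n, ∀ᵐ ω ∂μ, ∀ i : Fin p, |ξ n ω i| ≤ B := by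
    intro n
    filter_upwards [hξbdd n] with ω h i
    exact le_trans (coord_le_norm (ξ n ω) i) h
  have hcoordint : ∀ n m, ∀ i j : Fin p, Integrable (fun ω => ξ n ω i * ξ m ω j) μ := by
    intro n m i j
    refine Integrable.mono' (integrable_const (B*B))
      (((mcoord i).comp (hξmeas n)).mul ((mcoord j).comp (hξmeas m))).aestronglyMeasurable ?_
    filter_upwards [hcoordbd n, hcoordbd m] with ω h1 h2
    rw [Real.norm_eq_abs, abs_mul]
    exact mul_le_mul (h1 i) (h2 j) (abs_nonneg _) (le_trans (abs_nonneg _) (h1 i))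
  have hcross : ∀ i j : Fin p, ∀ k : ℕ,
      ∫ ω, ξ (2*k) ω i * ξ (2*k+1) ω j ∂μ = 0 := by
    intro i j k
    have hind : IndepFun (ξ (2*k)) (ξ (2*k+1)) μ := hξindep.indepFun (by omega)
    have hind2 : IndepFun (fun ω => ξ (2*k) ω i) (fun ω => ξ (2*k+1) ω j) μ :=
      hind.comp (mcoord i) (mcoord j)
    have := hind2.integral_mul_eq_mul_integral
      (Integrable.aestronglyMeasurable <| by
        refine Integrable.mono' (integrable_const B)
          ((mcoord i).comp (hξmeas (2*k))).aestronglyMeasurable ?_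
        filter_upwards [hcoordbd (2*k)] with ω h
        rw [Real.norm_eq_abs]; exact h i)
      (Integrable.aestronglyMeasurable <| by
        refine Integrable.mono' (integrable_const B)
          ((mcoord j).comp (hξmeas (2*k+1))).aestronglyMeasurable ?_
        filter_upwards [hcoordbd (2*k+1)] with ω h
        rw [Real.norm_eq_abs]; exact h j)
    rw [hcoordmean (2*k) i, hcoordmean (2*k+1) j] at this
    simpa [Pi.mul_apply] using this
  have hDcov : ∀ k : ℕ, ∀ i j : Fin p,
      ∫ ω, (ξ (2*k) ω - ξ (2*k+1) ω) i * (ξ (2*k) ω - ξ (2*k+1) ω) j ∂μ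
        = if i = j then (2:ℝ) else 0 := by
    intro k i j
    have hexp : (fun ω => (ξ (2*k) ω - ξ (2*k+1) ω) i * (ξ (2*k) ω - ξ (2*k+1) ω) j)
        = fun ω => ξ (2*k) ω i * ξ (2*k) ω j - ξ (2*k) ω i * ξ (2*k+1) ω j
            - ξ (2*k+1) ω i * ξ (2*k) ω j + ξ (2*k+1) ω i * ξ (2*k+1) ω j := by
      funext ω
      have e1 : (ξ (2*k) ω - ξ (2*k+1) ω) i = ξ (2*k) ω i - ξ (2*k+1) ω i := rfl
      have e2 : (ξ (2*k) ω - ξ (2*k+1) ω) j = ξ (2*k) ω j - ξ (2*k+1) ω j := rfl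
      rw [e1, e2]; ring
    rw [hexp]
    have i1 : Integrable (fun ω => ξ (2*k) ω i * ξ (2*k) ω j
        - ξ (2*k) ω i * ξ (2*k+1) ω j) μ :=
      (hcoordint _ _ i j).sub (hcoordint _ _ i j)
    have i2 : Integrable (fun ω => ξ (2*k) ω i * ξ (2*k) ω j
        - ξ (2*k) ω i * ξ (2*k+1) ω j - ξ (2*k+1) ω i * ξ (2*k) ω j) μ :=
      i1.sub (hcoordint _ _ i j)
    rw [integral_add i2 (hcoordint _ _ i j)]
    rw [integral_sub i1 (hcoordint _ _ i j)]
    rw [integral_sub (hcoordint _ _ i j) (hcoordint _ _ i j)]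
    rw [hξcov (2*k) i j, hξcov (2*k+1) i j, hcross i j k]
    have hcross2 : ∫ ω, ξ (2*k+1) ω i * ξ (2*k) ω j ∂μ = 0 := by
      have hind : IndepFun (ξ (2*k+1)) (ξ (2*k)) μ := hξindep.indepFun (by omega)
      have hind2 : IndepFun (fun ω => ξ (2*k+1) ω i) (fun ω => ξ (2*k) ω j) μ :=
        hind.comp (mcoord i) (mcoord j)
      have := hind2.integral_mul_eq_mul_integral
        (Integrable.aestronglyMeasurable <| by
          refine Integrable.mono' (integrable_const B)
            ((mcoord i).comp (hξmeas (2*k+1))).aestronglyMeasurable ?_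
          filter_upwards [hcoordbd (2*k+1)] with ω h
          rw [Real.norm_eq_abs]; exact h i)
        (Integrable.aestronglyMeasurable <| by
          refine Integrable.mono' (integrable_const B)
            ((mcoord j).comp (hξmeas (2*k))).aestronglyMeasurable ?_
          filter_upwards [hcoordbd (2*k)] with ω h
          rw [Real.norm_eq_abs]; exact h j)
      rw [hcoordmean (2*k+1) i, hcoordmean (2*k) j] at this
      simpa [Pi.mul_apply] using this
    rw [hcross2]
    by_cases hij : i = j
    · simp [hij]; norm_num
    · simp [hij]
  have hHDindep : ∀ k : ℕ, IndepFun (H k) (fun ω => ξ (2*k) ω - ξ (2*k+1) ω) μ := by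
    intro k
    rw [IndepFun_iff_Indep]
    have hDpr : Measurable[MeasurableSpace.comap (fun ω => (ξ (2*k) ω, ξ (2*k+1) ω)) inferInstance]
        (fun ω => ξ (2*k) ω - ξ (2*k+1) ω) := by
      have hpr : Measurable[MeasurableSpace.comap (fun ω => (ξ (2*k) ω, ξ (2*k+1) ω)) inferInstance]
          (fun ω => (ξ (2*k) ω, ξ (2*k+1) ω)) := measurable_iff_comap_le.2 le_rfl
      exact (measurable_fst.sub measurable_snd).comp hpr
    exact indep_of_indep_of_le_right
      (indep_of_indep_of_le_left (hpair_indep k).symm (measurable_iff_comap_le.1 (hHGmeas k)))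
      (measurable_iff_comap_le.1 hDpr)
  -- THE DRIFT STEP
  have hstep : ∀ k, ∫ ω, Real.exp (θ * ‖H (k+1) ω‖) ∂μ
      ≤ ρ * ∫ ω, Real.exp (θ * ‖H k ω‖) ∂μ + b := by
    intro k
    have hs1 := hS1 k
    have hs0 := hS0 k
    have hle := hFle k
    have hDb := hDbd k
    have hab := habd k
    -- measurability w.r.t. the conditioning σ-algebra
    have hHF : Measurable[carPastSigma S ξ k ⊔ MeasurableSpace.comap (fun ω => (ξ (2 * k) ω, ξ (2 * k + 1) ω)) inferInstance] (H k) := (hHGmeas k).mono le_sup_left le_rfl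
    have hDF : Measurable[carPastSigma S ξ k ⊔ MeasurableSpace.comap (fun ω => (ξ (2 * k) ω, ξ (2 * k + 1) ω)) inferInstance] (fun ω => ξ (2 * k) ω - ξ (2 * k + 1) ω) := by
      have hpr : Measurable[MeasurableSpace.comap (fun ω => (ξ (2 * k) ω, ξ (2 * k + 1) ω))
          inferInstance] (fun ω => (ξ (2 * k) ω, ξ (2 * k + 1) ω)) :=
        measurable_iff_comap_le.2 le_rfl
      exact ((measurable_fst.sub measurable_snd).comp hpr).mono le_sup_right le_rfl
    have hφF : Measurable[carPastSigma S ξ k ⊔ MeasurableSpace.comap (fun ω => (ξ (2 * k) ω, ξ (2 * k + 1) ω)) inferInstance] (fun ω => (inner ℝ (H k ω) (ξ (2 * k) ω - ξ (2 * k + 1) ω) : ℝ)) :=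
      hHF.inner hDF
    have hφm : Measurable (fun ω => (inner ℝ (H k ω) (ξ (2 * k) ω - ξ (2 * k + 1) ω) : ℝ)) :=
      (hHmeas k).inner ((hξmeas _).sub (hξmeas _))
    have hDmk : Measurable (fun ω => ξ (2 * k) ω - ξ (2 * k + 1) ω) :=
      (hξmeas _).sub (hξmeas _)
    -- the indicator functions
    have hSet1 : MeasurableSet {ω' | S k ω' = 1} := hSmeas k (measurableSet_singleton 1)
    have hSetm1 : MeasurableSet {ω' | S k ω' = -1} := hSmeas k (measurableSet_singleton (-1))
    have hSetA : MeasurableSet {ω' | S k ω' =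
        -Real.sign (inner ℝ (H k ω') (ξ (2 * k) ω' - ξ (2 * k + 1) ω'))} :=
      measurableSet_eq_fun (hSmeas k) (measurable_realSign.comp hφm).neg
    have hSetφ0F : MeasurableSet[carPastSigma S ξ k ⊔ MeasurableSpace.comap (fun ω => (ξ (2 * k) ω, ξ (2 * k + 1) ω)) inferInstance] {ω' |
        (inner ℝ (H k ω') (ξ (2 * k) ω' - ξ (2 * k + 1) ω') : ℝ) = 0} :=
      hφF (measurableSet_singleton 0)
    -- integrability of the indicators
    have hintInd : ∀ (A : Set Ω), MeasurableSet A →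
        Integrable (A.indicator (fun _ => (1:ℝ))) μ := by
      intro A hA
      refine hIntBdd _ 1 (measurable_const.indicator hA).aestronglyMeasurable ?_
      filter_upwards with ω
      by_cases h : ω ∈ A
      · rw [Set.indicator_of_mem h]; simp
      · rw [Set.indicator_of_notMem h]; simp
    -- bound for the exponential factors
    have hFpbd : ∀ᵐ ω ∂μ, |Real.exp (θ * ‖H k ω + (ξ (2 * k) ω - ξ (2 * k + 1) ω)‖)|
        ≤ Real.exp (θ * (2*B*k + 2*B)) := by
      filter_upwards [hab, hDb] with ω h1 h2
      rw [abs_of_pos (Real.exp_pos _), Real.exp_le_exp]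
      have := norm_add_le (H k ω) (ξ (2 * k) ω - ξ (2 * k + 1) ω)
      apply mul_le_mul_of_nonneg_left _ hθpos.le
      linarith
    have hFmbd : ∀ᵐ ω ∂μ, |Real.exp (θ * ‖H k ω - (ξ (2 * k) ω - ξ (2 * k + 1) ω)‖)|
        ≤ Real.exp (θ * (2*B*k + 2*B)) := by
      filter_upwards [hab, hDb] with ω h1 h2
      rw [abs_of_pos (Real.exp_pos _), Real.exp_le_exp]
      have := norm_sub_le (H k ω) (ξ (2 * k) ω - ξ (2 * k + 1) ω)
      apply mul_le_mul_of_nonneg_left _ hθpos.le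
      linarith
    have hexpnorm : Measurable (fun x : EuclideanSpace ℝ (Fin p) => Real.exp (θ*‖x‖)) :=
      Real.measurable_exp.comp (measurable_norm.const_mul θ)
    have hFpF : Measurable[carPastSigma S ξ k ⊔ MeasurableSpace.comap (fun ω => (ξ (2 * k) ω, ξ (2 * k + 1) ω)) inferInstance] (fun ω => Real.exp (θ * ‖H k ω + (ξ (2 * k) ω - ξ (2 * k + 1) ω)‖)) :=
      hexpnorm.comp (hHF.add hDF)
    have hFmF : Measurable[carPastSigma S ξ k ⊔ MeasurableSpace.comap (fun ω => (ξ (2 * k) ω, ξ (2 * k + 1) ω)) inferInstance] (fun ω => Real.exp (θ * ‖H k ω - (ξ (2 * k) ω - ξ (2 * k + 1) ω)‖)) :=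
      hexpnorm.comp (hHF.sub hDF)
    have hintFpIp : Integrable ((fun ω => Real.exp (θ * ‖H k ω + (ξ (2 * k) ω - ξ (2 * k + 1) ω)‖))
        * ({ω' | S k ω' = 1}.indicator (fun _ => (1:ℝ)))) μ := by
      refine hIntBdd _ (Real.exp (θ * (2*B*k + 2*B))) ?_ ?_
      · exact ((hFpF.mono hle le_rfl).mul (measurable_const.indicator hSet1)).aestronglyMeasurable
      · filter_upwards [hFpbd] with ω h1
        rw [Pi.mul_apply, abs_mul]
        calc |Real.exp (θ * ‖H k ω + (ξ (2 * k) ω - ξ (2 * k + 1) ω)‖)|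
              * |({ω' | S k ω' = 1}.indicator (fun _ => (1:ℝ))) ω|
            ≤ Real.exp (θ * (2*B*k + 2*B)) * 1 := by
              apply mul_le_mul h1 _ (abs_nonneg _) (Real.exp_pos _).le
              by_cases h : ω ∈ {ω' | S k ω' = 1}
              · rw [Set.indicator_of_mem h]; simp
              · rw [Set.indicator_of_notMem h]; simp
          _ = Real.exp (θ * (2*B*k + 2*B)) := mul_one _
    have hintFmIm : Integrable ((fun ω => Real.exp (θ * ‖H k ω - (ξ (2 * k) ω - ξ (2 * k + 1) ω)‖))
        * ({ω' | S k ω' = -1}.indicator (fun _ => (1:ℝ)))) μ := by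
      refine hIntBdd _ (Real.exp (θ * (2*B*k + 2*B))) ?_ ?_
      · exact ((hFmF.mono hle le_rfl).mul (measurable_const.indicator hSetm1)).aestronglyMeasurable
      · filter_upwards [hFmbd] with ω h1
        rw [Pi.mul_apply, abs_mul]
        calc |Real.exp (θ * ‖H k ω - (ξ (2 * k) ω - ξ (2 * k + 1) ω)‖)|
              * |({ω' | S k ω' = -1}.indicator (fun _ => (1:ℝ))) ω|
            ≤ Real.exp (θ * (2*B*k + 2*B)) * 1 := by
              apply mul_le_mul h1 _ (abs_nonneg _) (Real.exp_pos _).le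
              by_cases h : ω ∈ {ω' | S k ω' = -1}
              · rw [Set.indicator_of_mem h]; simp
              · rw [Set.indicator_of_notMem h]; simp
          _ = Real.exp (θ * (2*B*k + 2*B)) := mul_one _
    -- decomposition of f
    have hfdecomp : (fun ω => Real.exp (θ * ‖H (k+1) ω‖))
        = (fun ω => Real.exp (θ * ‖H k ω + (ξ (2 * k) ω - ξ (2 * k + 1) ω)‖))
            * ({ω' | S k ω' = 1}.indicator (fun _ => (1:ℝ)))
          + (fun ω => Real.exp (θ * ‖H k ω - (ξ (2 * k) ω - ξ (2 * k + 1) ω)‖))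
            * ({ω' | S k ω' = -1}.indicator (fun _ => (1:ℝ))) := by
      funext ω
      simp only [Pi.add_apply, Pi.mul_apply]
      rcases hSval k ω with h | h
      · have hmem : ω ∈ {ω' | S k ω' = 1} := h
        have hnmem : ω ∉ {ω' | S k ω' = -1} := by
          simp only [Set.mem_setOf_eq, h]; norm_num
        rw [Set.indicator_of_mem hmem, Set.indicator_of_notMem hnmem, hHrec k ω, h, one_smul]
        ring
      · have hnmem : ω ∉ {ω' | S k ω' = 1} := by
          simp only [Set.mem_setOf_eq, h]; norm_num
        have hmem : ω ∈ {ω' | S k ω' = -1} := h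
        rw [Set.indicator_of_mem hmem, Set.indicator_of_notMem hnmem, hHrec k ω, h]
        rw [neg_one_smul, ← sub_eq_add_neg]
        ring
    -- conditional expectation of f
    have cA3 : μ[(fun ω => Real.exp (θ * ‖H (k+1) ω‖)) | carPastSigma S ξ k ⊔ MeasurableSpace.comap (fun ω => (ξ (2 * k) ω, ξ (2 * k + 1) ω)) inferInstance]
        =ᵐ[μ] (fun ω => Real.exp (θ * ‖H k ω + (ξ (2 * k) ω - ξ (2 * k + 1) ω)‖))
            * μ[{ω' | S k ω' = 1}.indicator (fun _ => (1:ℝ)) | carPastSigma S ξ k ⊔ MeasurableSpace.comap (fun ω => (ξ (2 * k) ω, ξ (2 * k + 1) ω)) inferInstance]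
          + (fun ω => Real.exp (θ * ‖H k ω - (ξ (2 * k) ω - ξ (2 * k + 1) ω)‖))
            * μ[{ω' | S k ω' = -1}.indicator (fun _ => (1:ℝ)) | carPastSigma S ξ k ⊔ MeasurableSpace.comap (fun ω => (ξ (2 * k) ω, ξ (2 * k + 1) ω)) inferInstance] := by
      rw [hfdecomp]
      refine (condExp_add hintFpIp hintFmIm _).trans ?_
      exact Filter.EventuallyEq.add
        (condExp_mul_of_stronglyMeasurable_left hFpF.stronglyMeasurable hintFpIp (hintInd _ hSet1))
        (condExp_mul_of_stronglyMeasurable_left hFmF.stronglyMeasurable hintFmIm (hintInd _ hSetm1))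
    -- sum of the two conditional probabilities is 1
    have csum : μ[{ω' | S k ω' = 1}.indicator (fun _ => (1:ℝ)) | carPastSigma S ξ k ⊔ MeasurableSpace.comap (fun ω => (ξ (2 * k) ω, ξ (2 * k + 1) ω)) inferInstance]
        + μ[{ω' | S k ω' = -1}.indicator (fun _ => (1:ℝ)) | carPastSigma S ξ k ⊔ MeasurableSpace.comap (fun ω => (ξ (2 * k) ω, ξ (2 * k + 1) ω)) inferInstance] =ᵐ[μ] fun _ => (1:ℝ) := by
      have hid : ({ω' | S k ω' = 1}.indicator (fun _ => (1:ℝ)))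
          + ({ω' | S k ω' = -1}.indicator (fun _ => (1:ℝ))) = fun _ => (1:ℝ) := by
        funext ω
        simp only [Pi.add_apply]
        rcases hSval k ω with h | h
        · rw [Set.indicator_of_mem (by exact h), Set.indicator_of_notMem
            (by simp only [Set.mem_setOf_eq, h]; norm_num)]; norm_num
        · rw [Set.indicator_of_notMem (by simp only [Set.mem_setOf_eq, h]; norm_num),
            Set.indicator_of_mem (by exact h)]; norm_num
      refine ((condExp_add (hintInd _ hSet1) (hintInd _ hSetm1) _).symm).trans ?_
      rw [hid, condExp_const hle]
    have cposP : (0:Ω → ℝ) ≤ᵐ[μ] μ[{ω' | S k ω' = 1}.indicator (fun _ => (1:ℝ)) | carPastSigma S ξ k ⊔ MeasurableSpace.comap (fun ω => (ξ (2 * k) ω, ξ (2 * k + 1) ω)) inferInstance] :=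
      condExp_nonneg (Filter.Eventually.of_forall fun ω =>
        Set.indicator_nonneg (fun _ _ => zero_le_one) ω)
    have cposM : (0:Ω → ℝ) ≤ᵐ[μ] μ[{ω' | S k ω' = -1}.indicator (fun _ => (1:ℝ)) | carPastSigma S ξ k ⊔ MeasurableSpace.comap (fun ω => (ξ (2 * k) ω, ξ (2 * k + 1) ω)) inferInstance] :=
      condExp_nonneg (Filter.Eventually.of_forall fun ω =>
        Set.indicator_nonneg (fun _ _ => zero_le_one) ω)
    -- conditional expectation of S k
    have hintS : Integrable (S k) μ := by
      refine hIntBdd _ 1 (hSmeas k).aestronglyMeasurable ?_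
      filter_upwards with ω
      rcases hSval k ω with h | h <;> simp [h]
    have cS : μ[S k | carPastSigma S ξ k ⊔ MeasurableSpace.comap (fun ω => (ξ (2 * k) ω, ξ (2 * k + 1) ω)) inferInstance] =ᵐ[μ] μ[{ω' | S k ω' = 1}.indicator (fun _ => (1:ℝ)) | carPastSigma S ξ k ⊔ MeasurableSpace.comap (fun ω => (ξ (2 * k) ω, ξ (2 * k + 1) ω)) inferInstance]
        - μ[{ω' | S k ω' = -1}.indicator (fun _ => (1:ℝ)) | carPastSigma S ξ k ⊔ MeasurableSpace.comap (fun ω => (ξ (2 * k) ω, ξ (2 * k + 1) ω)) inferInstance] := by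
      have hid : S k = ({ω' | S k ω' = 1}.indicator (fun _ => (1:ℝ)))
          - ({ω' | S k ω' = -1}.indicator (fun _ => (1:ℝ))) := by
        funext ω
        simp only [Pi.sub_apply]
        rcases hSval k ω with h | h
        · rw [Set.indicator_of_mem (by exact h), Set.indicator_of_notMem
            (by simp only [Set.mem_setOf_eq, h]; norm_num), h]; norm_num
        · rw [Set.indicator_of_notMem (by simp only [Set.mem_setOf_eq, h]; norm_num),
            Set.indicator_of_mem (by exact h), h]; norm_num
      calc μ[S k | carPastSigma S ξ k ⊔ MeasurableSpace.comap (fun ω => (ξ (2 * k) ω, ξ (2 * k + 1) ω)) inferInstance] = μ[({ω' | S k ω' = 1}.indicator (fun _ => (1:ℝ)))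
            - ({ω' | S k ω' = -1}.indicator (fun _ => (1:ℝ))) | carPastSigma S ξ k ⊔ MeasurableSpace.comap (fun ω => (ξ (2 * k) ω, ξ (2 * k + 1) ω)) inferInstance] := by rw [← hid]
        _ =ᵐ[μ] _ := condExp_sub (hintInd _ hSet1) (hintInd _ hSetm1) _
    -- the sign identity for S k
    have cSsign : μ[S k | carPastSigma S ξ k ⊔ MeasurableSpace.comap (fun ω => (ξ (2 * k) ω, ξ (2 * k + 1) ω)) inferInstance] =ᵐ[μ] fun ω => (1 - 2*q)
        * Real.sign (inner ℝ (H k ω) (ξ (2 * k) ω - ξ (2 * k + 1) ω)) := by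
      set AA : Set Ω := {ω' | S k ω' =
        -Real.sign (inner ℝ (H k ω') (ξ (2 * k) ω' - ξ (2 * k + 1) ω'))} with hAA_def
      set Z0 : Set Ω := {ω' | (inner ℝ (H k ω') (ξ (2 * k) ω' - ξ (2 * k + 1) ω') : ℝ) = 0}
        with hZ0_def
      have hintIA : Integrable (AA.indicator (fun _ => (1:ℝ))) μ := hintInd _ hSetA
      have hintW : Integrable (fun ω => 1 - 2 * (AA.indicator (fun _ => (1:ℝ)) ω)) μ := by
        refine hIntBdd _ 3 ((measurable_const.sub
          ((measurable_const.indicator hSetA).const_mul 2)).aestronglyMeasurable) ?_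
        filter_upwards with ω
        by_cases h : ω ∈ AA
        · rw [Set.indicator_of_mem h]; norm_num
        · rw [Set.indicator_of_notMem h]; norm_num
      have hsignF : Measurable[carPastSigma S ξ k ⊔ MeasurableSpace.comap (fun ω => (ξ (2 * k) ω, ξ (2 * k + 1) ω)) inferInstance]
          (fun ω => Real.sign (inner ℝ (H k ω) (ξ (2 * k) ω - ξ (2 * k + 1) ω))) :=
        measurable_realSign.comp hφF
      have hsignm : Measurable
          (fun ω => Real.sign (inner ℝ (H k ω) (ξ (2 * k) ω - ξ (2 * k + 1) ω))) :=
        measurable_realSign.comp hφm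
      have hint1 : Integrable ((fun ω => Real.sign (inner ℝ (H k ω) (ξ (2 * k) ω - ξ (2 * k + 1) ω)))
          * (fun ω => 1 - 2 * (AA.indicator (fun _ => (1:ℝ)) ω))) μ := by
        refine hIntBdd _ 3 ((hsignm.mul (measurable_const.sub
          ((measurable_const.indicator hSetA).const_mul 2))).aestronglyMeasurable) ?_
        filter_upwards with ω
        rw [Pi.mul_apply, abs_mul]
        have h1 : |Real.sign (inner ℝ (H k ω) (ξ (2 * k) ω - ξ (2 * k + 1) ω))| ≤ 1 := by
          rcases lt_trichotomy (inner ℝ (H k ω) (ξ (2 * k) ω - ξ (2 * k + 1) ω) : ℝ) 0 with h|h|h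
          · rw [Real.sign_of_neg h]; norm_num
          · rw [h, Real.sign_zero]; norm_num
          · rw [Real.sign_of_pos h]; norm_num
        have h2 : |1 - 2 * (AA.indicator (fun _ => (1:ℝ)) ω)| ≤ 3 := by
          by_cases h : ω ∈ AA
          · rw [Set.indicator_of_mem h]; norm_num
          · rw [Set.indicator_of_notMem h]; norm_num
        calc |Real.sign (inner ℝ (H k ω) (ξ (2 * k) ω - ξ (2 * k + 1) ω))|
              * |1 - 2 * (AA.indicator (fun _ => (1:ℝ)) ω)| ≤ 1 * 3 :=
            mul_le_mul h1 h2 (abs_nonneg _) zero_le_one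
          _ = 3 := by norm_num
      have hZ0F : MeasurableSet[carPastSigma S ξ k ⊔ MeasurableSpace.comap (fun ω => (ξ (2 * k) ω, ξ (2 * k + 1) ω)) inferInstance] Z0 := hSetφ0F
      have hZ0m : MeasurableSet Z0 := hle _ hZ0F
      have hint2 : Integrable ((Z0.indicator (fun _ => (1:ℝ))) * S k) μ := by
        refine hIntBdd _ 1 (((measurable_const.indicator hZ0m).mul
          (hSmeas k)).aestronglyMeasurable) ?_
        filter_upwards with ω
        rw [Pi.mul_apply, abs_mul]
        have h1 : |Z0.indicator (fun _ => (1:ℝ)) ω| ≤ 1 := by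
          by_cases h : ω ∈ Z0
          · rw [Set.indicator_of_mem h]; norm_num
          · rw [Set.indicator_of_notMem h]; norm_num
        have h2 : |S k ω| ≤ 1 := by rcases hSval k ω with h|h <;> simp [h]
        calc |Z0.indicator (fun _ => (1:ℝ)) ω| * |S k ω| ≤ 1 * 1 :=
            mul_le_mul h1 h2 (abs_nonneg _) zero_le_one
          _ = 1 := by norm_num
      have hSid : S k = ((fun ω => Real.sign (inner ℝ (H k ω) (ξ (2 * k) ω - ξ (2 * k + 1) ω)))
            * (fun ω => 1 - 2 * (AA.indicator (fun _ => (1:ℝ)) ω)))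
          + ((Z0.indicator (fun _ => (1:ℝ))) * S k) := by
        funext ω
        simp only [Pi.add_apply, Pi.mul_apply]
        by_cases hφ : (inner ℝ (H k ω) (ξ (2 * k) ω - ξ (2 * k + 1) ω) : ℝ) = 0
        · have hsg : Real.sign (inner ℝ (H k ω) (ξ (2 * k) ω - ξ (2 * k + 1) ω)) = 0 := by
            rw [hφ]; exact Real.sign_zero
          have hmem : ω ∈ Z0 := hφ
          rw [hsg, Set.indicator_of_mem hmem]; ring
        · have hnmem : ω ∉ Z0 := hφ
          rw [Set.indicator_of_notMem hnmem]
          by_cases hA : ω ∈ AA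
          · have hA' : S k ω =
                -Real.sign (inner ℝ (H k ω) (ξ (2 * k) ω - ξ (2 * k + 1) ω)) := hA
            rw [Set.indicator_of_mem hA, hA']; ring
          · have hA' : ¬ (S k ω =
                -Real.sign (inner ℝ (H k ω) (ξ (2 * k) ω - ξ (2 * k + 1) ω))) := hA
            rw [Set.indicator_of_notMem hA]
            have hsg : S k ω = Real.sign (inner ℝ (H k ω) (ξ (2 * k) ω - ξ (2 * k + 1) ω)) := by
              rcases lt_trichotomy (inner ℝ (H k ω) (ξ (2 * k) ω - ξ (2 * k + 1) ω) : ℝ) 0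
                  with h|h|h
              · rw [Real.sign_of_neg h] at hA' ⊢
                rcases hSval k ω with hS|hS
                · exact absurd (by simp [hS]) hA'
                · rw [hS]
              · exact absurd h hφ
              · rw [Real.sign_of_pos h] at hA' ⊢
                rcases hSval k ω with hS|hS
                · rw [hS]
                · exact absurd (by simp [hS]) hA'
            rw [hsg]; ring
      have hW : μ[(fun ω => 1 - 2 * (AA.indicator (fun _ => (1:ℝ)) ω)) | carPastSigma S ξ k ⊔ MeasurableSpace.comap (fun ω => (ξ (2 * k) ω, ξ (2 * k + 1) ω)) inferInstance]
          =ᵐ[μ] fun ω => 1 - 2 * (μ[AA.indicator (fun _ => (1:ℝ)) | carPastSigma S ξ k ⊔ MeasurableSpace.comap (fun ω => (ξ (2 * k) ω, ξ (2 * k + 1) ω)) inferInstance]) ω := by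
        have hWid : (fun ω => 1 - 2 * (AA.indicator (fun _ => (1:ℝ)) ω))
            = (fun _ => (1:ℝ)) - (2:ℝ) • (AA.indicator (fun _ => (1:ℝ))) := by
          funext ω; simp [smul_eq_mul]
        rw [hWid]
        refine (condExp_sub (integrable_const 1) (Integrable.smul (2:ℝ) hintIA) _).trans ?_
        rw [condExp_const hle]
        filter_upwards [condExp_smul (μ := μ) (m := carPastSigma S ξ k ⊔ MeasurableSpace.comap (fun ω => (ξ (2 * k) ω, ξ (2 * k + 1) ω)) inferInstance) (2:ℝ)
          (AA.indicator (fun _ => (1:ℝ)))] with ω h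
        simp only [Pi.sub_apply, Pi.smul_apply, smul_eq_mul] at h ⊢
        rw [h]
      have emain : μ[S k | carPastSigma S ξ k ⊔ MeasurableSpace.comap (fun ω => (ξ (2 * k) ω, ξ (2 * k + 1) ω)) inferInstance]
          =ᵐ[μ] (fun ω => Real.sign (inner ℝ (H k ω) (ξ (2 * k) ω - ξ (2 * k + 1) ω)))
              * μ[(fun ω => 1 - 2 * (AA.indicator (fun _ => (1:ℝ)) ω)) | carPastSigma S ξ k ⊔ MeasurableSpace.comap (fun ω => (ξ (2 * k) ω, ξ (2 * k + 1) ω)) inferInstance]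
            + (Z0.indicator (fun _ => (1:ℝ))) * μ[S k | carPastSigma S ξ k ⊔ MeasurableSpace.comap (fun ω => (ξ (2 * k) ω, ξ (2 * k + 1) ω)) inferInstance] := by
        calc μ[S k | carPastSigma S ξ k ⊔ MeasurableSpace.comap (fun ω => (ξ (2 * k) ω, ξ (2 * k + 1) ω)) inferInstance]
            = μ[((fun ω => Real.sign (inner ℝ (H k ω) (ξ (2 * k) ω - ξ (2 * k + 1) ω)))
              * (fun ω => 1 - 2 * (AA.indicator (fun _ => (1:ℝ)) ω)))
              + ((Z0.indicator (fun _ => (1:ℝ))) * S k) | carPastSigma S ξ k ⊔ MeasurableSpace.comap (fun ω => (ξ (2 * k) ω, ξ (2 * k + 1) ω)) inferInstance] := by rw [← hSid]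
          _ =ᵐ[μ] _ := by
              refine (condExp_add hint1 hint2 _).trans ?_
              refine Filter.EventuallyEq.add ?_ ?_
              · exact condExp_mul_of_stronglyMeasurable_left hsignF.stronglyMeasurable hint1 hintW
              · refine condExp_mul_of_stronglyMeasurable_left ?_ hint2 hintS
                have hc : Measurable[carPastSigma S ξ k ⊔ MeasurableSpace.comap (fun ω => (ξ (2 * k) ω, ξ (2 * k + 1) ω)) inferInstance] (fun _ : Ω => (1:ℝ)) := measurable_const
                exact (hc.indicator hZ0F).stronglyMeasurable
      filter_upwards [emain, hW, hs1, hs0, cS, csum] with ω e1 e2 h1 h0 ecs esum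
      by_cases hφ : (inner ℝ (H k ω) (ξ (2 * k) ω - ξ (2 * k + 1) ω) : ℝ) = 0
      · have h0' := h0 hφ
        have hsg : Real.sign (inner ℝ (H k ω) (ξ (2 * k) ω - ξ (2 * k + 1) ω)) = 0 := by
          rw [hφ]; exact Real.sign_zero
        rw [hsg, mul_zero]
        have ecs' : (μ[S k | carPastSigma S ξ k ⊔ MeasurableSpace.comap (fun ω => (ξ (2 * k) ω, ξ (2 * k + 1) ω)) inferInstance]) ω
            = (μ[{ω' | S k ω' = 1}.indicator (fun _ => (1:ℝ)) | carPastSigma S ξ k ⊔ MeasurableSpace.comap (fun ω => (ξ (2 * k) ω, ξ (2 * k + 1) ω)) inferInstance]) ω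
              - (μ[{ω' | S k ω' = -1}.indicator (fun _ => (1:ℝ)) | carPastSigma S ξ k ⊔ MeasurableSpace.comap (fun ω => (ξ (2 * k) ω, ξ (2 * k + 1) ω)) inferInstance]) ω := by
          rw [ecs]; simp [Pi.sub_apply]
        have esum' : (μ[{ω' | S k ω' = 1}.indicator (fun _ => (1:ℝ)) | carPastSigma S ξ k ⊔ MeasurableSpace.comap (fun ω => (ξ (2 * k) ω, ξ (2 * k + 1) ω)) inferInstance]) ω
            + (μ[{ω' | S k ω' = -1}.indicator (fun _ => (1:ℝ)) | carPastSigma S ξ k ⊔ MeasurableSpace.comap (fun ω => (ξ (2 * k) ω, ξ (2 * k + 1) ω)) inferInstance]) ω = 1 := by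
          have h' := esum
          simp only [Pi.add_apply] at h'
          exact h'
        rw [ecs', h0']
        linarith
      · have h1' := h1 hφ
        have hnmem : ω ∉ Z0 := hφ
        rw [e1]
        simp only [Pi.add_apply, Pi.mul_apply]
        rw [Set.indicator_of_notMem hnmem, e2, h1']
        ring
    have cdiff : (fun ω => (μ[{ω' | S k ω' = 1}.indicator (fun _ => (1:ℝ)) | carPastSigma S ξ k ⊔ MeasurableSpace.comap (fun ω => (ξ (2 * k) ω, ξ (2 * k + 1) ω)) inferInstance]) ω
          - (μ[{ω' | S k ω' = -1}.indicator (fun _ => (1:ℝ)) | carPastSigma S ξ k ⊔ MeasurableSpace.comap (fun ω => (ξ (2 * k) ω, ξ (2 * k + 1) ω)) inferInstance]) ω)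
        =ᵐ[μ] fun ω => (1 - 2*q)
          * Real.sign (inner ℝ (H k ω) (ξ (2 * k) ω - ξ (2 * k + 1) ω)) := by
      refine Filter.EventuallyEq.trans ?_ ((cS.symm).trans cSsign)
      filter_upwards with ω
      simp [Pi.sub_apply]
    -- pointwise drift bound on the region  R ≤ ‖H k ω‖
    have hdrift : ∀ᵐ ω ∂μ, R ≤ ‖H k ω‖ →
        (μ[(fun ω => Real.exp (θ * ‖H (k+1) ω‖)) | carPastSigma S ξ k ⊔ MeasurableSpace.comap (fun ω => (ξ (2 * k) ω, ξ (2 * k + 1) ω)) inferInstance]) ω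
          ≤ (1 + (3/8)*(θ*ε)) * Real.exp (θ*‖H k ω‖)
            - θ*(2*q-1) * (Real.exp (θ*‖H k ω‖)
              * |(inner ℝ (H k ω) (ξ (2 * k) ω - ξ (2 * k + 1) ω) : ℝ)| / ‖H k ω‖) := by
      filter_upwards [cA3, csum, cposP, cposM, cdiff, hDb] with ω e3 esum epp epm ediff eD hE
      have ha : 0 < ‖H k ω‖ := lt_of_lt_of_le hRpos hE
      have hup : ‖H k ω + (ξ (2 * k) ω - ξ (2 * k + 1) ω)‖ - ‖H k ω‖
          ≤ ((inner ℝ (H k ω) (ξ (2 * k) ω - ξ (2 * k + 1) ω) : ℝ)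
            + ‖ξ (2 * k) ω - ξ (2 * k + 1) ω‖^2/2)/‖H k ω‖ :=
        norm_add_sub_le_inner _ _ ha
      have hum : ‖H k ω - (ξ (2 * k) ω - ξ (2 * k + 1) ω)‖ - ‖H k ω‖
          ≤ (-(inner ℝ (H k ω) (ξ (2 * k) ω - ξ (2 * k + 1) ω) : ℝ)
            + ‖ξ (2 * k) ω - ξ (2 * k + 1) ω‖^2/2)/‖H k ω‖ := by
        have h2 := norm_add_sub_le_inner (H k ω) (-(ξ (2 * k) ω - ξ (2 * k + 1) ω)) ha
        rw [← sub_eq_add_neg, inner_neg_right, norm_neg] at h2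
        exact h2
      have haup : |‖H k ω + (ξ (2 * k) ω - ξ (2 * k + 1) ω)‖ - ‖H k ω‖|
          ≤ ‖ξ (2 * k) ω - ξ (2 * k + 1) ω‖ := by
        have h3 := abs_norm_sub_norm_le (H k ω + (ξ (2 * k) ω - ξ (2 * k + 1) ω)) (H k ω)
        have h4 : H k ω + (ξ (2 * k) ω - ξ (2 * k + 1) ω) - H k ω
            = ξ (2 * k) ω - ξ (2 * k + 1) ω := by abel
        rw [h4] at h3; exact h3
      have haum : |‖H k ω - (ξ (2 * k) ω - ξ (2 * k + 1) ω)‖ - ‖H k ω‖|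
          ≤ ‖ξ (2 * k) ω - ξ (2 * k + 1) ω‖ := by
        have h3 := abs_norm_sub_norm_le (H k ω - (ξ (2 * k) ω - ξ (2 * k + 1) ω)) (H k ω)
        have h4 : H k ω - (ξ (2 * k) ω - ξ (2 * k + 1) ω) - H k ω
            = -(ξ (2 * k) ω - ξ (2 * k + 1) ω) := by abel
        rw [h4, norm_neg] at h3; exact h3
      have esum' : (μ[{ω' | S k ω' = 1}.indicator (fun _ => (1:ℝ)) | carPastSigma S ξ k ⊔ MeasurableSpace.comap (fun ω => (ξ (2 * k) ω, ξ (2 * k + 1) ω)) inferInstance]) ω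
          + (μ[{ω' | S k ω' = -1}.indicator (fun _ => (1:ℝ)) | carPastSigma S ξ k ⊔ MeasurableSpace.comap (fun ω => (ξ (2 * k) ω, ξ (2 * k + 1) ω)) inferInstance]) ω = 1 := by
        have h' := esum; simp only [Pi.add_apply] at h'; exact h'
      have epp' : 0 ≤ (μ[{ω' | S k ω' = 1}.indicator (fun _ => (1:ℝ)) | carPastSigma S ξ k ⊔ MeasurableSpace.comap (fun ω => (ξ (2 * k) ω, ξ (2 * k + 1) ω)) inferInstance]) ω := by
        simpa using epp
      have epm' : 0 ≤ (μ[{ω' | S k ω' = -1}.indicator (fun _ => (1:ℝ)) | carPastSigma S ξ k ⊔ MeasurableSpace.comap (fun ω => (ξ (2 * k) ω, ξ (2 * k + 1) ω)) inferInstance]) ω := by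
        simpa using epm
      have hE' : 16*B^3/(2*q-1) ≤ ‖H k ω‖ := by rw [← hR_def]; exact hE
      have harith := drift_arith B q θ (‖H k ω‖) (‖ξ (2 * k) ω - ξ (2 * k + 1) ω‖)
        (inner ℝ (H k ω) (ξ (2 * k) ω - ξ (2 * k + 1) ω))
        (‖H k ω + (ξ (2 * k) ω - ξ (2 * k + 1) ω)‖)
        (‖H k ω - (ξ (2 * k) ω - ξ (2 * k + 1) ω)‖)
        ((μ[{ω' | S k ω' = 1}.indicator (fun _ => (1:ℝ)) | carPastSigma S ξ k ⊔ MeasurableSpace.comap (fun ω => (ξ (2 * k) ω, ξ (2 * k + 1) ω)) inferInstance]) ω)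
        ((μ[{ω' | S k ω' = -1}.indicator (fun _ => (1:ℝ)) | carPastSigma S ξ k ⊔ MeasurableSpace.comap (fun ω => (ξ (2 * k) ω, ξ (2 * k + 1) ω)) inferInstance]) ω)
        hB hq2 hθpos hθ1 hθ2 hE' hup hum haup haum eD epp' epm' esum' ediff
      rw [e3]
      simp only [Pi.add_apply, Pi.mul_apply]
      rw [hε_def]
      calc Real.exp (θ * ‖H k ω + (ξ (2 * k) ω - ξ (2 * k + 1) ω)‖)
            * (μ[{ω' | S k ω' = 1}.indicator (fun _ => (1:ℝ)) | carPastSigma S ξ k ⊔ MeasurableSpace.comap (fun ω => (ξ (2 * k) ω, ξ (2 * k + 1) ω)) inferInstance]) ω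
          + Real.exp (θ * ‖H k ω - (ξ (2 * k) ω - ξ (2 * k + 1) ω)‖)
            * (μ[{ω' | S k ω' = -1}.indicator (fun _ => (1:ℝ)) | carPastSigma S ξ k ⊔ MeasurableSpace.comap (fun ω => (ξ (2 * k) ω, ξ (2 * k + 1) ω)) inferInstance]) ω
          = (μ[{ω' | S k ω' = 1}.indicator (fun _ => (1:ℝ)) | carPastSigma S ξ k ⊔ MeasurableSpace.comap (fun ω => (ξ (2 * k) ω, ξ (2 * k + 1) ω)) inferInstance]) ω
            * Real.exp (θ * ‖H k ω + (ξ (2 * k) ω - ξ (2 * k + 1) ω)‖)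
          + (μ[{ω' | S k ω' = -1}.indicator (fun _ => (1:ℝ)) | carPastSigma S ξ k ⊔ MeasurableSpace.comap (fun ω => (ξ (2 * k) ω, ξ (2 * k + 1) ω)) inferInstance]) ω
            * Real.exp (θ * ‖H k ω - (ξ (2 * k) ω - ξ (2 * k + 1) ω)‖) := by ring
        _ ≤ _ := harith
    -- integral assembly
    have hEm : MeasurableSet {ω' | R ≤ ‖H k ω'‖} := (hHmeas k).norm measurableSet_Ici
    have hEmG : MeasurableSet[carPastSigma S ξ k] {ω' | R ≤ ‖H k ω'‖} :=
      (measurable_norm.comp (hHGmeas k)) measurableSet_Ici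
    have hEmF : MeasurableSet[carPastSigma S ξ k ⊔ MeasurableSpace.comap (fun ω => (ξ (2 * k) ω, ξ (2 * k + 1) ω)) inferInstance] {ω' | R ≤ ‖H k ω'‖} :=
      (le_sup_left : carPastSigma S ξ k ≤ carPastSigma S ξ k ⊔ MeasurableSpace.comap (fun ω => (ξ (2 * k) ω, ξ (2 * k + 1) ω)) inferInstance) _ hEmG
    have hintf := hexpint (k+1)
    have hφbd : ∀ᵐ ω ∂μ, |(inner ℝ (H k ω) (ξ (2 * k) ω - ξ (2 * k + 1) ω) : ℝ)|
        ≤ ‖H k ω‖ * (2*B) := by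
      filter_upwards [hDb] with ω h1
      calc |(inner ℝ (H k ω) (ξ (2 * k) ω - ξ (2 * k + 1) ω) : ℝ)|
          ≤ ‖H k ω‖ * ‖ξ (2 * k) ω - ξ (2 * k + 1) ω‖ := abs_real_inner_le_norm _ _
        _ ≤ ‖H k ω‖ * (2*B) := mul_le_mul_of_nonneg_left h1 (norm_nonneg _)
    have hterm2bd : ∀ᵐ ω ∂μ, Real.exp (θ*‖H k ω‖)
        * |(inner ℝ (H k ω) (ξ (2 * k) ω - ξ (2 * k + 1) ω) : ℝ)| / ‖H k ω‖
        ≤ Real.exp (θ*(2*B*k)) * (2*B) := by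
      filter_upwards [hφbd, hab] with ω h1 h2
      by_cases hz : ‖H k ω‖ = 0
      · have hφz : (inner ℝ (H k ω) (ξ (2 * k) ω - ξ (2 * k + 1) ω) : ℝ) = 0 := by
          have : H k ω = 0 := norm_eq_zero.1 hz
          rw [this, inner_zero_left]
        rw [hφz, abs_zero, mul_zero, zero_div]
        positivity
      · have hzp : 0 < ‖H k ω‖ := lt_of_le_of_ne (norm_nonneg _) (Ne.symm hz)
        rw [div_le_iff₀ hzp]
        calc Real.exp (θ*‖H k ω‖)
            * |(inner ℝ (H k ω) (ξ (2 * k) ω - ξ (2 * k + 1) ω) : ℝ)|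
            ≤ Real.exp (θ*(2*B*k)) * (‖H k ω‖ * (2*B)) := by
              apply mul_le_mul _ h1 (abs_nonneg _) (Real.exp_pos _).le
              exact Real.exp_le_exp.2 (mul_le_mul_of_nonneg_left h2 hθpos.le)
          _ = Real.exp (θ*(2*B*k)) * (2*B) * ‖H k ω‖ := by ring
    have hgm : Measurable (fun ω => (1 + (3/8)*(θ*ε)) * Real.exp (θ*‖H k ω‖)
        - θ*(2*q-1) * (Real.exp (θ*‖H k ω‖)
          * |(inner ℝ (H k ω) (ξ (2 * k) ω - ξ (2 * k + 1) ω) : ℝ)| / ‖H k ω‖)) := by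
      apply Measurable.sub
      · exact ((Real.measurable_exp.comp ((hHmeas k).norm.const_mul θ)).const_mul _)
      · apply Measurable.const_mul
        exact ((Real.measurable_exp.comp ((hHmeas k).norm.const_mul θ)).mul hφm.abs).div
          (hHmeas k).norm
    have hgint : Integrable (fun ω => (1 + (3/8)*(θ*ε)) * Real.exp (θ*‖H k ω‖)
        - θ*(2*q-1) * (Real.exp (θ*‖H k ω‖)
          * |(inner ℝ (H k ω) (ξ (2 * k) ω - ξ (2 * k + 1) ω) : ℝ)| / ‖H k ω‖)) μ := by
      refine hIntBdd _ ((1 + (3/8)*(θ*ε)) * Real.exp (θ*(2*B*k))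
        + θ*(2*q-1) * (Real.exp (θ*(2*B*k)) * (2*B))) hgm.aestronglyMeasurable ?_
      filter_upwards [hterm2bd, hab, hφbd] with ω h1 h2 h3
      have hc1 : 0 < 1 + (3/8)*(θ*ε) := by nlinarith [mul_pos hθpos hεpos]
      have ht1 : (1 + (3/8)*(θ*ε)) * Real.exp (θ*‖H k ω‖)
          ≤ (1 + (3/8)*(θ*ε)) * Real.exp (θ*(2*B*k)) := by
        apply mul_le_mul_of_nonneg_left _ hc1.le
        exact Real.exp_le_exp.2 (mul_le_mul_of_nonneg_left h2 hθpos.le)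
      have ht2 : 0 ≤ Real.exp (θ*‖H k ω‖)
          * |(inner ℝ (H k ω) (ξ (2 * k) ω - ξ (2 * k + 1) ω) : ℝ)| / ‖H k ω‖ := by positivity
      have ht3 : 0 ≤ θ*(2*q-1) := by positivity
      rw [abs_sub_comm, abs_le]
      constructor
      · have := mul_le_mul_of_nonneg_left h1 ht3
        nlinarith [Real.exp_pos (θ*‖H k ω‖), hc1]
      · have := mul_le_mul_of_nonneg_left h1 ht3
        nlinarith [Real.exp_pos (θ*‖H k ω‖), hc1, mul_nonneg ht3 ht2]
    have hsplit : ∫ ω, Real.exp (θ * ‖H (k+1) ω‖) ∂μ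
        = (∫ ω in {ω' | R ≤ ‖H k ω'‖}, Real.exp (θ * ‖H (k+1) ω‖) ∂μ)
          + ∫ ω in {ω' | R ≤ ‖H k ω'‖}ᶜ, Real.exp (θ * ‖H (k+1) ω‖) ∂μ :=
      (integral_add_compl hEm hintf).symm
    have hout : ∫ ω in {ω' | R ≤ ‖H k ω'‖}ᶜ, Real.exp (θ * ‖H (k+1) ω‖) ∂μ ≤ b := by
      have h1 : ∀ᵐ ω ∂μ.restrict {ω' | R ≤ ‖H k ω'‖}ᶜ, Real.exp (θ * ‖H (k+1) ω‖) ≤ b := by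
        rw [ae_restrict_iff' hEm.compl]
        filter_upwards [hDb] with ω hDω hmem
        have hnR : ‖H k ω‖ < R := by
          simpa [Set.mem_compl_iff, Set.mem_setOf_eq, not_le] using hmem
        have hs : ‖S k ω‖ = 1 := by rcases hSval k ω with h | h <;> simp [h]
        have hH1 : ‖H (k+1) ω‖ ≤ ‖H k ω‖ + ‖ξ (2 * k) ω - ξ (2 * k + 1) ω‖ := by
          rw [hHrec k ω]
          calc ‖H k ω + S k ω • (ξ (2 * k) ω - ξ (2 * k + 1) ω)‖
              ≤ ‖H k ω‖ + ‖S k ω • (ξ (2 * k) ω - ξ (2 * k + 1) ω)‖ := norm_add_le _ _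
            _ = ‖H k ω‖ + ‖ξ (2 * k) ω - ξ (2 * k + 1) ω‖ := by rw [norm_smul, hs, one_mul]
        rw [hb_def, Real.exp_le_exp]
        apply mul_le_mul_of_nonneg_left _ hθpos.le
        linarith
      calc ∫ ω in {ω' | R ≤ ‖H k ω'‖}ᶜ, Real.exp (θ * ‖H (k+1) ω‖) ∂μ
          ≤ ∫ _ in {ω' | R ≤ ‖H k ω'‖}ᶜ, b ∂μ :=
            integral_mono_ae hintf.restrict (integrable_const b) h1
        _ = (μ {ω' | R ≤ ‖H k ω'‖}ᶜ).toReal * b := by rw [setIntegral_const, smul_eq_mul, measureReal_def]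
        _ ≤ b := by
            have hμ1 : (μ {ω' | R ≤ ‖H k ω'‖}ᶜ).toReal ≤ 1 := by
              have h2 := prob_le_one (μ := μ) (s := {ω' | R ≤ ‖H k ω'‖}ᶜ)
              have := ENNReal.toReal_mono (by norm_num) h2
              simpa using this
            nlinarith [hbpos]
    have hintindE_exp : Integrable
        ({ω' | R ≤ ‖H k ω'‖}.indicator (fun ω' => Real.exp (θ*‖H k ω'‖))) μ := by
      refine hIntBdd _ (Real.exp (θ*(2*B*k)))
        ((Measurable.indicator (Real.measurable_exp.comp ((hHmeas k).norm.const_mul θ))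
          hEm).aestronglyMeasurable) ?_
      filter_upwards [hab] with ω h1
      by_cases h : ω ∈ {ω' | R ≤ ‖H k ω'‖}
      · rw [Set.indicator_of_mem h, abs_of_pos (Real.exp_pos _)]
        exact Real.exp_le_exp.2 (mul_le_mul_of_nonneg_left h1 hθpos.le)
      · rw [Set.indicator_of_notMem h, abs_zero]; positivity
    have hintindE_phi : Integrable (fun ω =>
        ({ω' | R ≤ ‖H k ω'‖}.indicator (fun ω' => Real.exp (θ*‖H k ω'‖)/‖H k ω'‖) ω)
          * |(inner ℝ (H k ω) (ξ (2 * k) ω - ξ (2 * k + 1) ω) : ℝ)|) μ := by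
      refine hIntBdd _ (Real.exp (θ*(2*B*k)) * (2*B)) ?_ ?_
      · exact ((Measurable.indicator ((Real.measurable_exp.comp
          ((hHmeas k).norm.const_mul θ)).div (hHmeas k).norm) hEm).mul
          hφm.abs).aestronglyMeasurable
      · filter_upwards [hφbd, hab] with ω h1 h2
        by_cases h : ω ∈ {ω' | R ≤ ‖H k ω'‖}
        · rw [Set.indicator_of_mem h]
          have hzp : 0 < ‖H k ω‖ := lt_of_lt_of_le hRpos h
          rw [abs_of_nonneg (by positivity)]
          rw [div_mul_eq_mul_div, div_le_iff₀ hzp]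
          calc Real.exp (θ*‖H k ω‖)
              * |(inner ℝ (H k ω) (ξ (2 * k) ω - ξ (2 * k + 1) ω) : ℝ)|
              ≤ Real.exp (θ*(2*B*k)) * (‖H k ω‖ * (2*B)) := by
                apply mul_le_mul _ h1 (abs_nonneg _) (Real.exp_pos _).le
                exact Real.exp_le_exp.2 (mul_le_mul_of_nonneg_left h2 hθpos.le)
            _ = Real.exp (θ*(2*B*k)) * (2*B) * ‖H k ω‖ := by ring
        · rw [Set.indicator_of_notMem h, zero_mul, abs_zero]; positivity
    have hin : ∫ ω in {ω' | R ≤ ‖H k ω'‖}, Real.exp (θ * ‖H (k+1) ω‖) ∂μ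
        ≤ ρ * ∫ ω, Real.exp (θ * ‖H k ω‖) ∂μ := by
      have e5 : ∫ ω in {ω' | R ≤ ‖H k ω'‖}, Real.exp (θ * ‖H (k+1) ω‖) ∂μ
          = ∫ ω in {ω' | R ≤ ‖H k ω'‖},
              (μ[(fun ω => Real.exp (θ * ‖H (k+1) ω‖)) | carPastSigma S ξ k ⊔ MeasurableSpace.comap (fun ω => (ξ (2 * k) ω, ξ (2 * k + 1) ω)) inferInstance]) ω ∂μ :=
        (setIntegral_condExp hle hintf hEmF).symm
      have e6 : ∫ ω in {ω' | R ≤ ‖H k ω'‖},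
            (μ[(fun ω => Real.exp (θ * ‖H (k+1) ω‖)) | carPastSigma S ξ k ⊔ MeasurableSpace.comap (fun ω => (ξ (2 * k) ω, ξ (2 * k + 1) ω)) inferInstance]) ω ∂μ
          ≤ ∫ ω in {ω' | R ≤ ‖H k ω'‖}, ((1 + (3/8)*(θ*ε)) * Real.exp (θ*‖H k ω‖)
            - θ*(2*q-1) * (Real.exp (θ*‖H k ω‖)
              * |(inner ℝ (H k ω) (ξ (2 * k) ω - ξ (2 * k + 1) ω) : ℝ)| / ‖H k ω‖)) ∂μ := by
        refine integral_mono_ae integrable_condExp.restrict hgint.restrict ?_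
        exact (ae_restrict_iff' hEm).2 hdrift
      have e8 : {ω' | R ≤ ‖H k ω'‖}.indicator (fun ω => (1 + (3/8)*(θ*ε)) * Real.exp (θ*‖H k ω‖)
            - θ*(2*q-1) * (Real.exp (θ*‖H k ω‖)
              * |(inner ℝ (H k ω) (ξ (2 * k) ω - ξ (2 * k + 1) ω) : ℝ)| / ‖H k ω‖))
          = fun ω => (1 + (3/8)*(θ*ε))
              * ({ω' | R ≤ ‖H k ω'‖}.indicator (fun ω' => Real.exp (θ*‖H k ω'‖)) ω)
            - θ*(2*q-1) * (({ω' | R ≤ ‖H k ω'‖}.indicator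
                (fun ω' => Real.exp (θ*‖H k ω'‖)/‖H k ω'‖) ω)
              * |(inner ℝ (H k ω) (ξ (2 * k) ω - ξ (2 * k + 1) ω) : ℝ)|) := by
        funext ω
        by_cases h : ω ∈ {ω' | R ≤ ‖H k ω'‖}
        · rw [Set.indicator_of_mem h, Set.indicator_of_mem h, Set.indicator_of_mem h]
          ring
        · rw [Set.indicator_of_notMem h, Set.indicator_of_notMem h,
            Set.indicator_of_notMem h]
          ring
      have e7 : ∫ ω in {ω' | R ≤ ‖H k ω'‖}, ((1 + (3/8)*(θ*ε)) * Real.exp (θ*‖H k ω‖)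
            - θ*(2*q-1) * (Real.exp (θ*‖H k ω‖)
              * |(inner ℝ (H k ω) (ξ (2 * k) ω - ξ (2 * k + 1) ω) : ℝ)| / ‖H k ω‖)) ∂μ
          = (1 + (3/8)*(θ*ε))
              * ∫ ω, ({ω' | R ≤ ‖H k ω'‖}.indicator (fun ω' => Real.exp (θ*‖H k ω'‖)) ω) ∂μ
            - θ*(2*q-1) * ∫ ω, (({ω' | R ≤ ‖H k ω'‖}.indicator
                (fun ω' => Real.exp (θ*‖H k ω'‖)/‖H k ω'‖) ω)
              * |(inner ℝ (H k ω) (ξ (2 * k) ω - ξ (2 * k + 1) ω) : ℝ)|) ∂μ := by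
        rw [← integral_indicator hEm, e8]
        rw [integral_sub (hintindE_exp.const_mul _) (hintindE_phi.const_mul _)]
        rw [integral_const_mul, integral_const_mul]
      have hclaim := claimB μ B R θ (2*B*k) hB hRpos hθpos (by positivity) (H k)
        (fun ω => ξ (2 * k) ω - ξ (2 * k + 1) ω) (hHmeas k) hDmk (hHDindep k)
        hab hDb (hDcov k)
      have hI0 : 0 ≤ ∫ ω, ({ω' | R ≤ ‖H k ω'‖}.indicator
          (fun ω' => Real.exp (θ*‖H k ω'‖)) ω) ∂μ :=
        integral_nonneg (fun ω => Set.indicator_nonneg (fun _ _ => (Real.exp_pos _).le) ω)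
      have hIle : ∫ ω, ({ω' | R ≤ ‖H k ω'‖}.indicator
            (fun ω' => Real.exp (θ*‖H k ω'‖)) ω) ∂μ
          ≤ ∫ ω, Real.exp (θ*‖H k ω‖) ∂μ := by
        refine integral_mono_ae hintindE_exp (hexpint k) ?_
        filter_upwards with ω
        exact Set.indicator_le_self' (fun x _ => (Real.exp_pos _).le) ω
      rw [e5]
      refine le_trans e6 ?_
      rw [e7]
      have hθε : 0 < θ*ε := mul_pos hθpos hεpos
      have hcoef : θ*(2*q-1) * (1/B) = θ*ε := by rw [hε_def]; field_simp
      calc (1 + (3/8)*(θ*ε))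
              * ∫ ω, ({ω' | R ≤ ‖H k ω'‖}.indicator (fun ω' => Real.exp (θ*‖H k ω'‖)) ω) ∂μ
            - θ*(2*q-1) * ∫ ω, (({ω' | R ≤ ‖H k ω'‖}.indicator
                (fun ω' => Real.exp (θ*‖H k ω'‖)/‖H k ω'‖) ω)
              * |(inner ℝ (H k ω) (ξ (2 * k) ω - ξ (2 * k + 1) ω) : ℝ)|) ∂μ
          ≤ (1 + (3/8)*(θ*ε))
              * ∫ ω, ({ω' | R ≤ ‖H k ω'‖}.indicator (fun ω' => Real.exp (θ*‖H k ω'‖)) ω) ∂μ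
            - θ*(2*q-1) * ((1/B) * ∫ ω, ({ω' | R ≤ ‖H k ω'‖}.indicator
                (fun ω' => Real.exp (θ*‖H k ω'‖)) ω) ∂μ) := by
            have := mul_le_mul_of_nonneg_left hclaim (by positivity : 0 ≤ θ*(2*q-1))
            linarith
        _ = (1 + (3/8)*(θ*ε) - θ*ε) * ∫ ω, ({ω' | R ≤ ‖H k ω'‖}.indicator
              (fun ω' => Real.exp (θ*‖H k ω'‖)) ω) ∂μ := by
            rw [hε_def]; field_simp
        _ ≤ ρ * ∫ ω, ({ω' | R ≤ ‖H k ω'‖}.indicator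
              (fun ω' => Real.exp (θ*‖H k ω'‖)) ω) ∂μ := by
            apply mul_le_mul_of_nonneg_right _ hI0
            rw [hρ_def]; linarith
        _ ≤ ρ * ∫ ω, Real.exp (θ*‖H k ω‖) ∂μ := mul_le_mul_of_nonneg_left hIle hρ0
    rw [hsplit]
    exact add_le_add hin hout
  -- uniform bound
  have hu : ∀ k, ∫ ω, Real.exp (θ * ‖H k ω‖) ∂μ ≤ M := by
    intro k
    induction k with
    | zero =>
      have h0 : (fun ω => Real.exp (θ * ‖H 0 ω‖)) = fun _ => (1:ℝ) := by
        funext ω; simp [hH0 ω]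
      rw [h0]; simp [hM1]
    | succ k ih =>
      calc ∫ ω, Real.exp (θ * ‖H (k+1) ω‖) ∂μ
          ≤ ρ * ∫ ω, Real.exp (θ * ‖H k ω‖) ∂μ + b := hstep k
        _ ≤ ρ * M + b := by nlinarith [hρ0]
        _ ≤ M := by
            have h1 : 0 < 1 - ρ := by linarith
            have h2 : b ≤ (1-ρ) * M := by
              rw [← div_le_iff₀' h1] at *; exact hMb
            nlinarith
  -- Markov conclusion
  have hmain : ∀ δ : ℝ, 0 < δ → ∃ K : ℝ, 0 < K ∧ ∀ k : ℕ,
      μ {ω | K < ‖H k ω‖ ^ 2} ≤ ENNReal.ofReal δ := by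
    intro δ hδ
    set t : ℝ := max 1 (Real.log (M/δ) / θ) with ht_def
    have ht1 : 1 ≤ t := le_max_left _ _
    have htpos : 0 < t := lt_of_lt_of_le one_pos ht1
    refine ⟨t^2, by positivity, fun k => ?_⟩
    have hMδ : M ≤ δ * Real.exp (θ * t) := by
      have hlog : Real.log (M/δ) ≤ θ * t := by
        have h := le_max_right 1 (Real.log (M/δ) / θ)
        rw [← ht_def] at h
        calc Real.log (M/δ) = (Real.log (M/δ) / θ) * θ := by field_simp
          _ ≤ t * θ := mul_le_mul_of_nonneg_right h hθpos.le
          _ = θ * t := mul_comm _ _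
      have hMδpos : 0 < M / δ := by positivity
      have := Real.exp_le_exp.2 hlog
      rw [Real.exp_log hMδpos] at this
      calc M = δ * (M/δ) := by field_simp
        _ ≤ δ * Real.exp (θ * t) := by nlinarith
    have hsub : {ω | t^2 < ‖H k ω‖ ^ 2} ⊆ {ω | Real.exp (θ*t) ≤ Real.exp (θ * ‖H k ω‖)} := by
      intro ω hω
      simp only [Set.mem_setOf_eq] at *
      have ht' : t < ‖H k ω‖ := lt_of_pow_lt_pow_left₀ 2 (norm_nonneg _) hω
      exact Real.exp_le_exp.2 (mul_le_mul_of_nonneg_left ht'.le hθpos.le)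
    have hmark := mul_meas_ge_le_integral_of_nonneg
      (μ := μ) (f := fun ω => Real.exp (θ * ‖H k ω‖))
      (Filter.Eventually.of_forall fun ω => (Real.exp_pos _).le) (hexpint k) (Real.exp (θ*t))
    have hle1 : μ {ω | t^2 < ‖H k ω‖ ^ 2} ≤ μ {ω | Real.exp (θ*t) ≤ Real.exp (θ * ‖H k ω‖)} :=
      measure_mono hsub
    have hne : μ {ω | Real.exp (θ*t) ≤ Real.exp (θ * ‖H k ω‖)} ≠ ⊤ := measure_ne_top μ _
    have htr : (μ {ω | Real.exp (θ*t) ≤ Real.exp (θ * ‖H k ω‖)}).toReal ≤ δ := by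
      have hc : 0 < Real.exp (θ*t) := Real.exp_pos _
      have h2 : Real.exp (θ*t) * (μ {ω | Real.exp (θ*t) ≤ Real.exp (θ * ‖H k ω‖)}).toReal ≤ M :=
        le_trans hmark (hu k)
      rw [mul_comm] at h2
      have h3 := (le_div_iff₀ hc).2 h2
      refine le_trans h3 ?_
      rw [div_le_iff₀ hc]
      linarith [hMδ]
    calc μ {ω | t^2 < ‖H k ω‖ ^ 2}
        ≤ μ {ω | Real.exp (θ*t) ≤ Real.exp (θ * ‖H k ω‖)} := hle1
      _ = ENNReal.ofReal ((μ {ω | Real.exp (θ*t) ≤ Real.exp (θ * ‖H k ω‖)}).toReal) :=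
          (ENNReal.ofReal_toReal hne).symm
      _ ≤ ENNReal.ofReal δ := ENNReal.ofReal_le_ofReal htr
  refine ⟨hmain, ?_⟩
  intro δ hδ
  obtain ⟨K, hK, hKbd⟩ := hmain δ hδ
  refine ⟨K, hK, fun k hk => ?_⟩
  have hk1 : (1:ℝ) ≤ (k:ℝ) := by exact_mod_cast hk
  have hkpos : (0:ℝ) < 2*(k:ℝ) := by linarith
  have hset : {ω | K / (2*(k:ℝ)) < ‖H k ω‖ ^ 2 / (2*(k:ℝ))} = {ω | K < ‖H k ω‖ ^ 2} := by
    ext ω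
    simp only [Set.mem_setOf_eq]
    exact div_lt_div_iff_of_pos_right hkpos
  rw [hset]
  exact hKbd k
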